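/- arXiv:2205.11572 — 8 statements merged into one kernel-verified Lean document; each statement's English description precedes it below -/
import Mathlib

section
/- (Speicher–von Waldenfels CLT, odd case.) Let (A, φ) be a quantum probability space, J an index set, and b : J × ℕ → A a family such that for each j ∈ J there exists j' ∈ J with (b^{(j)}_n)* = b^{(j')}_n for all n. Assume: (i) (singleton condition) φ(b^{(j_1)}_{σ(1)} ⋯ b^{(j_n)}_{σ(n)}) = 0 for all n ≥ 1, all (j_1,…,j_n) ∈ J^n and all σ : {1,…,n} → ℕ for which there exists k ∈ ℕ with exactly one i satisfying σ(i) = k; (ii) for every n ≥ 1 there is a constant C_n < ∞ with |φ(b^{(j_1)}_{σ(1)} ⋯ b^{(j_n)}_{σ(n)})| ≤ C_n for all (j_1,…,j_n) ∈ J^n and all σ : {1,…,n} → ℕ; (iii) φ(b^{(j_1)}_{ϑ(σ(1))} ⋯ b^{(j_n)}_{ϑ(σ(n))}) = φ(b^{(j_1)}_{σ(1)} ⋯ b^{(j_n)}_{σ(n)}) for all n, all (j_1,…,j_n) ∈ J^n, all σ : {1,…,n} → ℕ such that every value in the range of σ is attained exactly twice, and all order-preserving injections ϑ from the range of σ into ℕ.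 Then for every odd n ≥ 1 and every (j_1,…,j_n) ∈ J^n, the sequence φ(S_N^{(j_1)} ⋯ S_N^{(j_n)}) converges to 0 as N → ∞. -/
open Filter Finset
open scoped ComplexOrder

lemma image_card_le' {n : ℕ} (σ : Fin n → ℕ)
    (h : ¬ ∃ k : ℕ, (Finset.univ.filter (fun i => σ i = k)).card = 1) :
    2 * (Finset.univ.image σ).card ≤ n := by
  push_neg at h
  have hsum : (Finset.univ : Finset (Fin n)).card
      = ∑ k ∈ Finset.univ.image σ, (Finset.univ.filter (fun i => σ i = k)).card :=
    Finset.card_eq_sum_card_fiberwise (fun i _ => Finset.mem_image_of_mem σ (Finset.mem_univ i))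
  have h2 : ∀ k ∈ Finset.univ.image σ, 2 ≤ (Finset.univ.filter (fun i => σ i = k)).card := by
    intro k hk
    obtain ⟨i, _, hi⟩ := Finset.mem_image.1 hk
    have hpos : 0 < (Finset.univ.filter (fun i => σ i = k)).card :=
      Finset.card_pos.2 ⟨i, Finset.mem_filter.2 ⟨Finset.mem_univ i, hi⟩⟩
    have := h k
    omega
  calc 2 * (Finset.univ.image σ).card = ∑ _k ∈ Finset.univ.image σ, 2 := by
        rw [Finset.sum_const, smul_eq_mul, mul_comm]
    _ ≤ ∑ k ∈ Finset.univ.image σ, (Finset.univ.filter (fun i => σ i = k)).card :=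
        Finset.sum_le_sum h2
    _ = n := by rw [← hsum, Finset.card_univ, Fintype.card_fin]

lemma bad_card_le' (n r N : ℕ) (hrn : n = 2 * r + 1) (s : Finset (Fin n → ℕ))
    (hs : ∀ σ ∈ s, σ ∈ (Fintype.piFinset fun _ : Fin n => Finset.Icc 1 N) ∧
      ¬ ∃ k : ℕ, (Finset.univ.filter (fun i => σ i = k)).card = 1) :
    s.card ≤ n ^ n * (N + 1) ^ r := by
  classical
  have lenle : ∀ σ : Fin n → ℕ,
      (¬ ∃ k : ℕ, (Finset.univ.filter (fun i => σ i = k)).card = 1) →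
      ((Finset.univ.image σ).sort (· ≤ ·)).length ≤ r := by
    intro σ hσ
    have h1 : ((Finset.univ.image σ).sort (· ≤ ·)).length = (Finset.univ.image σ).card :=
      Finset.length_sort _
    have := image_card_le' σ hσ
    omega
  have key : s.card
      ≤ ((Fintype.piFinset fun _ : Fin n => Finset.range n) ×ˢ
          (Fintype.piFinset fun k : Fin n =>
            if (k : ℕ) < r then Finset.Icc 0 N else ({0} : Finset ℕ))).card := by
    apply Finset.card_le_card_of_injOn
      (fun σ => (fun i : Fin n => (((Finset.univ.image σ).sort (· ≤ ·)).idxOf (σ i) : ℕ),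
                 fun k : Fin n => (((Finset.univ.image σ).sort (· ≤ ·)).getD k 0)))
    · intro σ hσ
      obtain ⟨hσpi, hσbad⟩ := hs σ hσ
      set L := (Finset.univ.image σ).sort (· ≤ ·) with hL
      have hlenr : L.length ≤ r := lenle σ hσbad
      have hmemL : ∀ i, σ i ∈ L := fun i =>
        (Finset.mem_sort _).2 (Finset.mem_image_of_mem σ (Finset.mem_univ i))
      refine Finset.mem_product.2 ⟨?_, ?_⟩
      · refine Fintype.mem_piFinset.2 fun i => Finset.mem_range.2 ?_
        show L.idxOf (σ i) < n
        have := List.idxOf_lt_length_iff.2 (hmemL i)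
        omega
      · refine Fintype.mem_piFinset.2 fun k => ?_
        show L.getD (k : ℕ) 0 ∈ _
        by_cases hk : (k : ℕ) < r
        · simp only [hk, if_true]
          refine Finset.mem_Icc.2 ⟨Nat.zero_le _, ?_⟩
          by_cases hk2 : (k : ℕ) < L.length
          · rw [List.getD_eq_getElem _ _ hk2]
            have h3 : L[(k : ℕ)] ∈ L := List.getElem_mem _
            have h4 : L[(k : ℕ)] ∈ Finset.univ.image σ := (Finset.mem_sort _).1 h3
            obtain ⟨i, _, hi⟩ := Finset.mem_image.1 h4
            have h5 := Fintype.mem_piFinset.1 hσpi i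
            rw [← hi]
            exact (Finset.mem_Icc.1 h5).2
          · rw [List.getD_eq_default _ _ (by omega)]
            exact Nat.zero_le _
        · simp only [hk, if_false]
          rw [List.getD_eq_default _ _ (by omega)]
          exact Finset.mem_singleton_self 0
    · intro σ₁ hσ₁ σ₂ hσ₂ heq
      obtain ⟨hσpi₁, hσbad₁⟩ := hs σ₁ hσ₁
      simp only [Prod.mk.injEq] at heq
      obtain ⟨h1, h2⟩ := heq
      funext i
      set L₁ := (Finset.univ.image σ₁).sort (· ≤ ·) with hL₁
      set L₂ := (Finset.univ.image σ₂).sort (· ≤ ·) with hL₂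
      have hm1 : σ₁ i ∈ L₁ := (Finset.mem_sort _).2 (Finset.mem_image_of_mem σ₁ (Finset.mem_univ i))
      have hm2 : σ₂ i ∈ L₂ := (Finset.mem_sort _).2 (Finset.mem_image_of_mem σ₂ (Finset.mem_univ i))
      have hi1 := List.idxOf_lt_length_iff.2 hm1
      have hi2 := List.idxOf_lt_length_iff.2 hm2
      have e1 : σ₁ i = L₁.getD (L₁.idxOf (σ₁ i)) 0 := by
        rw [List.getD_eq_getElem _ _ hi1, List.getElem_idxOf]
      have e2 : σ₂ i = L₂.getD (L₂.idxOf (σ₂ i)) 0 := by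
        rw [List.getD_eq_getElem _ _ hi2, List.getElem_idxOf]
      have hτ : L₁.idxOf (σ₁ i) = L₂.idxOf (σ₂ i) := congrFun h1 i
      have hlt : L₁.idxOf (σ₁ i) < n := by
        have h9 := lenle σ₁ hσbad₁
        rw [← hL₁] at h9
        omega
      have h2' := congrFun h2 (⟨L₁.idxOf (σ₁ i), hlt⟩ : Fin n)
      simp only at h2'
      calc σ₁ i = L₁.getD (L₁.idxOf (σ₁ i)) 0 := e1
        _ = L₂.getD (L₁.idxOf (σ₁ i)) 0 := h2'
        _ = L₂.getD (L₂.idxOf (σ₂ i)) 0 := by rw [hτ]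
        _ = σ₂ i := e2.symm
  refine key.trans ?_
  rw [Finset.card_product, Fintype.card_piFinset, Fintype.card_piFinset]
  have c1 : ∏ _i : Fin n, (Finset.range n).card = n ^ n := by
    simp [Finset.prod_const]
  have c2 : (∏ k : Fin n,
      ((if (k : ℕ) < r then Finset.Icc 0 N else ({0} : Finset ℕ))).card) ≤ (N + 1) ^ r := by
    have : ∀ k : Fin n, ((if (k : ℕ) < r then Finset.Icc 0 N else ({0} : Finset ℕ))).card
        = if (k : ℕ) < r then N + 1 else 1 := by
      intro k; by_cases hk : (k : ℕ) < r <;> simp [hk]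
    rw [Finset.prod_congr rfl (fun k _ => this k), Finset.prod_ite, Finset.prod_const,
      Finset.prod_const, one_pow, mul_one]
    have hcard : (Finset.univ.filter (fun k : Fin n => (k : ℕ) < r)).card ≤ r := by
      calc (Finset.univ.filter (fun k : Fin n => (k : ℕ) < r)).card
          ≤ (Finset.range r).card := by
            refine Finset.card_le_card_of_injOn (fun k : Fin n => (k : ℕ)) ?_ ?_
            · intro k hk
              exact Finset.mem_range.2 (Finset.mem_filter.1 hk).2
            · exact fun a _ b _ hab => Fin.val_injective hab
        _ = r := Finset.card_range r
    exact Nat.pow_le_pow_right (Nat.succ_le_succ (Nat.zero_le N)) hcard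
  rw [c1]
  exact Nat.mul_le_mul_left _ c2


/-- **Speicher–von Waldenfels central limit theorem, odd case.** -/
theorem speicher_von_waldenfels_CLT_odd
    {A : Type*} [Ring A] [StarRing A] [Algebra ℂ A] [StarModule ℂ A]
    (φ : A →ₗ[ℂ] ℂ)
    (hφ1 : φ 1 = 1)
    (hφpos : ∀ a : A, 0 ≤ φ (star a * a))
    {J : Type*} (b : J → ℕ → A)
    (hstar : ∀ j : J, ∃ j' : J, ∀ n : ℕ, star (b j n) = b j' n)
    -- (i) singleton condition
    (hi : ∀ (n : ℕ), 1 ≤ n → ∀ (j : Fin n → J) (σ : Fin n → ℕ),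
      (∃ k : ℕ, (Finset.univ.filter (fun i => σ i = k)).card = 1) →
      φ ((List.ofFn fun i => b (j i) (σ i)).prod) = 0)
    -- (ii) uniform boundedness
    (hii : ∀ (n : ℕ), 1 ≤ n → ∃ C : ℝ, ∀ (j : Fin n → J) (σ : Fin n → ℕ),
      ‖φ ((List.ofFn fun i => b (j i) (σ i)).prod)‖ ≤ C)
    -- (iii) invariance of second order correlations under order preserving injections
    (hiii : ∀ (n : ℕ) (j : Fin n → J) (σ : Fin n → ℕ),
      (∀ k ∈ Set.range σ, (Finset.univ.filter (fun i => σ i = k)).card = 2) →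
      ∀ ϑ : ℕ → ℕ, StrictMono ϑ →
        φ ((List.ofFn fun i => b (j i) (ϑ (σ i))).prod) =
          φ ((List.ofFn fun i => b (j i) (σ i)).prod)) :
    ∀ (n : ℕ), Odd n → ∀ j : Fin n → J,
      Tendsto
        (fun N : ℕ => φ ((List.ofFn fun i : Fin n =>
          ((Real.sqrt N : ℂ))⁻¹ • ∑ m ∈ Finset.Icc 1 N, b (j i) m).prod))
        atTop (nhds 0) := by
  intro n hn j
  classical
  obtain ⟨r, hr⟩ := hn
  have hrn : n = 2 * r + 1 := by omega
  have hn1 : 1 ≤ n := by omega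
  obtain ⟨C, hC⟩ := hii n hn1
  have hC0 : 0 ≤ C := le_trans (norm_nonneg _) (hC j (fun _ => 0))
  apply squeeze_zero_norm' (a := fun N : ℕ => (C * n ^ n * 2 ^ r) * (Real.sqrt N)⁻¹)
  · filter_upwards [eventually_ge_atTop 1] with N hN
    have hN1 : (1 : ℝ) ≤ (N : ℝ) := by exact_mod_cast hN
    set c : ℂ := ((Real.sqrt N : ℂ))⁻¹ with hc
    set M := MultilinearMap.mkPiAlgebraFin ℂ n A with hM
    set P : (Fin n → ℕ) → ℂ := fun σ => φ ((List.ofFn fun i => b (j i) (σ i)).prod) with hP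
    set pi := Fintype.piFinset fun _ : Fin n => Finset.Icc 1 N with hpi
    set Bad := pi.filter
      (fun σ : Fin n → ℕ => ¬ ∃ k : ℕ, (Finset.univ.filter (fun i => σ i = k)).card = 1) with hBad
    have step1 : φ ((List.ofFn fun i : Fin n =>
        c • ∑ m ∈ Finset.Icc 1 N, b (j i) m).prod) = c ^ n * ∑ σ ∈ Bad, P σ := by
      have e0 : (List.ofFn fun i : Fin n => c • ∑ m ∈ Finset.Icc 1 N, b (j i) m).prod
          = M (fun i => c • ∑ m ∈ Finset.Icc 1 N, b (j i) m) :=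
        (MultilinearMap.mkPiAlgebraFin_apply _).symm
      rw [e0]
      have e1 : M (fun i => c • ∑ m ∈ Finset.Icc 1 N, b (j i) m)
          = c ^ n • M (fun i => ∑ m ∈ Finset.Icc 1 N, b (j i) m) := by
        rw [MultilinearMap.map_smul_univ M (fun _ => c)]
        simp [Finset.prod_const]
      rw [e1, M.map_sum_finset (fun i m => b (j i) m) (fun _ => Finset.Icc 1 N)]
      rw [map_smul, map_sum]
      rw [show ∀ z : ℂ, c ^ n • z = c ^ n * z from fun z => rfl]
      congr 1
      have : ∀ σ ∈ pi, φ (M fun i => b (j i) (σ i)) ≠ 0 →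
          (¬ ∃ k : ℕ, (Finset.univ.filter (fun i => σ i = k)).card = 1) := by
        intro σ _ hne hex
        exact hne (by rw [MultilinearMap.mkPiAlgebraFin_apply]; exact hi n hn1 j σ hex)
      rw [← Finset.sum_filter_of_ne this]
      apply Finset.sum_congr rfl
      intro σ _
      rw [hP, MultilinearMap.mkPiAlgebraFin_apply]
    rw [step1]
    have hnormc : ‖c‖ = (Real.sqrt N)⁻¹ := by
      rw [hc, norm_inv, Complex.norm_real, Real.norm_eq_abs,
        abs_of_nonneg (Real.sqrt_nonneg _)]
    have hsum : ‖∑ σ ∈ Bad, P σ‖ ≤ (Bad.card : ℝ) * C := by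
      calc ‖∑ σ ∈ Bad, P σ‖ ≤ ∑ σ ∈ Bad, ‖P σ‖ := norm_sum_le _ _
        _ ≤ Bad.card • C := Finset.sum_le_card_nsmul _ _ _ (fun σ _ => by
            rw [show ‖P σ‖ = ‖φ ((List.ofFn fun i => b (j i) (σ i)).prod)‖ from rfl]
            exact hC j σ)
        _ = (Bad.card : ℝ) * C := by rw [nsmul_eq_mul]
    have hcard : (Bad.card : ℝ) ≤ (n : ℝ) ^ n * ((N : ℝ) + 1) ^ r := by
      have h1 : Bad.card ≤ n ^ n * (N + 1) ^ r := by
        apply bad_card_le' n r N hrn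
        intro σ hσ
        exact ⟨(Finset.mem_filter.1 hσ).1, (Finset.mem_filter.1 hσ).2⟩
      calc (Bad.card : ℝ) ≤ ((n ^ n * (N + 1) ^ r : ℕ) : ℝ) := by exact_mod_cast h1
        _ = (n : ℝ) ^ n * ((N : ℝ) + 1) ^ r := by push_cast; ring
    have hsqrtpos : 0 < Real.sqrt N := Real.sqrt_pos.2 (by linarith)
    have hNpos : (0:ℝ) < (N:ℝ) := by linarith
    calc ‖c ^ n * ∑ σ ∈ Bad, P σ‖ = ‖c‖ ^ n * ‖∑ σ ∈ Bad, P σ‖ := by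
          rw [norm_mul, norm_pow]
      _ ≤ ((Real.sqrt N)⁻¹) ^ n * ((n : ℝ) ^ n * ((N : ℝ) + 1) ^ r * C) := by
          rw [hnormc]
          apply mul_le_mul_of_nonneg_left _ (by positivity)
          calc ‖∑ σ ∈ Bad, P σ‖ ≤ (Bad.card : ℝ) * C := hsum
            _ ≤ (n : ℝ) ^ n * ((N : ℝ) + 1) ^ r * C :=
                mul_le_mul_of_nonneg_right hcard hC0
      _ ≤ (C * n ^ n * 2 ^ r) * (Real.sqrt N)⁻¹ := by
          have hpow : ((Real.sqrt N)⁻¹) ^ n = ((N:ℝ) ^ r)⁻¹ * (Real.sqrt N)⁻¹ := by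
            rw [hrn, pow_succ, pow_mul, inv_pow, inv_pow, Real.sq_sqrt hNpos.le]
          have h2N : ((N : ℝ) + 1) ^ r ≤ 2 ^ r * (N : ℝ) ^ r := by
            rw [← mul_pow]
            exact pow_le_pow_left₀ (by linarith) (by linarith) r
          rw [hpow]
          have key : ((N:ℝ) ^ r)⁻¹ * ((N : ℝ) + 1) ^ r ≤ 2 ^ r := by
            rw [inv_mul_le_iff₀ (by positivity)]
            calc ((N : ℝ) + 1) ^ r ≤ 2 ^ r * (N : ℝ) ^ r := h2N
              _ = (N:ℝ) ^ r * 2 ^ r := by ring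
          calc ((N:ℝ) ^ r)⁻¹ * (Real.sqrt N)⁻¹ * ((n : ℝ) ^ n * ((N : ℝ) + 1) ^ r * C)
              = (C * n ^ n) * (((N:ℝ) ^ r)⁻¹ * ((N : ℝ) + 1) ^ r) * (Real.sqrt N)⁻¹ := by
                ring
            _ ≤ (C * n ^ n) * 2 ^ r * (Real.sqrt N)⁻¹ := by
                apply mul_le_mul_of_nonneg_right _ (by positivity)
                exact mul_le_mul_of_nonneg_left key (by positivity)
            _ = (C * n ^ n * 2 ^ r) * (Real.sqrt N)⁻¹ := by ring
  · have h1 : Tendsto (fun N : ℕ => (Real.sqrt N)⁻¹) atTop (nhds 0) := by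
      have h2 : Tendsto (fun x : ℝ => x ^ (-(1/2 : ℝ))) atTop (nhds 0) :=
        tendsto_rpow_neg_atTop (by norm_num)
      have h3 : Tendsto (fun N : ℕ => ((N:ℝ)) ^ (-(1/2 : ℝ))) atTop (nhds 0) :=
        h2.comp tendsto_natCast_atTop_atTop
      refine h3.congr' ?_
      filter_upwards [eventually_ge_atTop 0] with N _
      rw [Real.rpow_neg (Nat.cast_nonneg N), ← Real.sqrt_eq_rpow]
    have h4 := h1.const_mul (C * (n:ℝ) ^ n * 2 ^ r)
    simpa using h4
end

section
/- (Speicher–von Waldenfels CLT, even case.) Let (A, φ) be a quantum probability space, J an index set, and b : J × ℕ → A a family such that for each j ∈ J there exists j' ∈ J with (b^{(j)}_n)* = b^{(j')}_n for all n. Assume hypotheses (i), (ii), (iii): (i) φ(b^{(j_1)}_{σ(1)} ⋯ b^{(j_n)}_{σ(n)}) = 0 whenever some value k ∈ ℕ is attained by σ : {1,…,n} → ℕ exactly once; (ii) for every n there is C_n < ∞ bounding |φ(b^{(j_1)}_{σ(1)} ⋯ b^{(j_n)}_{σ(n)})| uniformly over all (j_1,…,j_n) ∈ J^n and all σ : {1,…,n}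 → ℕ; (iii) φ(b^{(j_1)}_{ϑ(σ(1))} ⋯ b^{(j_n)}_{ϑ(σ(n))}) = φ(b^{(j_1)}_{σ(1)} ⋯ b^{(j_n)}_{σ(n)}) for all σ whose every attained value is attained exactly twice and all order-preserving injections ϑ of the range of σ into ℕ. Then for every even n ≥ 2 and every (j_1,…,j_n) ∈ J^n, φ(S_N^{(j_1)} ⋯ S_N^{(j_n)}) converges, as N → ∞, to (1/(n/2)!) · Σ_σ φ(b^{(j_1)}_{σ(1)} ⋯ b^{(j_n)}_{σ(n)}), where the sum runs over all functions σ : {1,…,n} → {1,…,n/2} such that every k ∈ {1,…,n/2} has exactly two preimages under σ. -/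
open Filter Finset
open scoped ComplexOrder

section SVWAux

variable {A : Type*} [Ring A] [Algebra ℂ A]

lemma svw_prod_ofFn_smul (c : ℂ) : ∀ (n : ℕ) (x : Fin n → A),
    (List.ofFn fun i => c • x i).prod = c ^ n • (List.ofFn x).prod := by
  intro n
  induction n with
  | zero => intro x; simp
  | succ n ih =>
    intro x
    rw [List.ofFn_succ, List.ofFn_succ, List.prod_cons, List.prod_cons, ih (fun i => x i.succ),
      smul_mul_smul_comm, pow_succ, mul_comm]

lemma svw_prod_ofFn_sum : ∀ (n : ℕ) (s : Finset ℕ) (g : Fin n → ℕ → A),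
    (List.ofFn fun i => ∑ m ∈ s, g i m).prod =
      ∑ σ ∈ Fintype.piFinset (fun _ : Fin n => s), (List.ofFn fun i => g i (σ i)).prod := by
  intro n
  induction n with
  | zero => intro s g; simp
  | succ n ih =>
    intro s g
    rw [List.ofFn_succ, List.prod_cons, ih s (fun i => g i.succ), Finset.sum_mul_sum]
    rw [← Finset.sum_product']
    refine Finset.sum_nbij' (fun p => Fin.cons p.1 p.2) (fun σ => (σ 0, Fin.tail σ)) ?_ ?_ ?_ ?_ ?_
    · rintro ⟨a, σ⟩ h
      simp only [Finset.mem_product, Fintype.mem_piFinset] at h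
      simp only [Fintype.mem_piFinset]
      intro i
      refine Fin.cases ?_ ?_ i
      · simpa using h.1
      · intro k; simpa using h.2 k
    · intro σ h
      simp only [Fintype.mem_piFinset] at h
      simp only [Finset.mem_product, Fintype.mem_piFinset]
      exact ⟨h 0, fun k => h k.succ⟩
    · rintro ⟨a, σ⟩ _; simp [Fin.tail]
    · intro σ _; simp [Fin.cons_self_tail]
    · rintro ⟨a, σ⟩ _
      rw [List.ofFn_succ]
      simp [Fin.tail]

end SVWAux

def svwTheta (f : ℕ → ℕ) (m t : ℕ) : ℕ :=
  if t = 0 then 0 else if t ≤ m then f (t - 1) else f (m - 1) + (t - m)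

lemma svwTheta_eval (f : ℕ → ℕ) (m t : ℕ) (h1 : 1 ≤ t) (h2 : t ≤ m) :
    svwTheta f m t = f (t - 1) := by
  unfold svwTheta
  rw [if_neg (by omega), if_pos h2]

lemma svwTheta_strictMono {f : ℕ → ℕ} {m : ℕ} (hm : 1 ≤ m)
    (hmono : ∀ a b, a < b → b < m → f a < f b)
    (hf : ∀ a, a < m → 1 ≤ f a) : StrictMono (svwTheta f m) := by
  apply strictMono_nat_of_lt_succ
  intro t
  unfold svwTheta
  rcases Nat.eq_zero_or_pos t with rfl | ht
  · rw [if_pos rfl, if_neg (by omega), if_pos hm]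
    exact hf 0 hm
  · by_cases h2 : t ≤ m
    · by_cases h1 : t + 1 ≤ m
      · rw [if_neg (by omega), if_pos h2, if_neg (by omega), if_pos h1]
        exact hmono (t - 1) (t + 1 - 1) (by omega) (by omega)
      · rw [if_neg (by omega), if_pos h2, if_neg (by omega), if_neg h1]
        have ht2 : t = m := by omega
        subst ht2
        omega
    · rw [if_neg (by omega), if_neg h2, if_neg (by omega), if_neg (by omega)]
      omega

lemma svw_sum_fibers {n : ℕ} (σ : Fin n → ℕ) :
    n = ∑ k ∈ Finset.image σ Finset.univ, (Finset.univ.filter fun i => σ i = k).card := by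
  have := Finset.card_eq_sum_card_fiberwise
    (f := σ) (s := Finset.univ) (t := Finset.image σ Finset.univ)
    (fun x _ => Finset.mem_image_of_mem σ (Finset.mem_univ x))
  simpa using this

lemma svw_card_image_pair {n : ℕ} (σ : Fin n → ℕ)
    (h : ∀ k ∈ Finset.image σ Finset.univ, (Finset.univ.filter fun i => σ i = k).card = 2) :
    2 * (Finset.image σ Finset.univ).card = n := by
  have hs := svw_sum_fibers σ
  rw [Finset.sum_congr rfl (fun k hk => h k hk)] at hs
  simp only [Finset.sum_const, smul_eq_mul] at hs
  omega

lemma svw_card_image_bad {n : ℕ} (σ : Fin n → ℕ)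
    (h1 : ¬ ∃ k : ℕ, (Finset.univ.filter fun i => σ i = k).card = 1)
    (h2 : ¬ ∀ k ∈ Finset.image σ Finset.univ,
      (Finset.univ.filter fun i => σ i = k).card = 2) :
    2 * (Finset.image σ Finset.univ).card < n := by
  push_neg at h1 h2
  obtain ⟨k₀, hk₀m, hk₀⟩ := h2
  have hfib : ∀ k ∈ Finset.image σ Finset.univ,
      2 ≤ (Finset.univ.filter fun i => σ i = k).card := by
    intro k hk
    rw [Finset.mem_image] at hk
    obtain ⟨i, _, hi⟩ := hk
    have h0 : 0 < (Finset.univ.filter fun i => σ i = k).card :=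
      Finset.card_pos.2 ⟨i, Finset.mem_filter.2 ⟨Finset.mem_univ i, hi⟩⟩
    have := h1 k
    omega
  have hk₀3 : 3 ≤ (Finset.univ.filter fun i => σ i = k₀).card := by
    have := hfib k₀ hk₀m
    omega
  have hsum := svw_sum_fibers σ
  rw [← Finset.add_sum_erase _ _ hk₀m] at hsum
  have hrest : 2 * ((Finset.image σ Finset.univ).erase k₀).card ≤
      ∑ k ∈ (Finset.image σ Finset.univ).erase k₀,
        (Finset.univ.filter fun i => σ i = k).card := by
    calc 2 * ((Finset.image σ Finset.univ).erase k₀).card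
        = ((Finset.image σ Finset.univ).erase k₀).card • 2 := by rw [smul_eq_mul, mul_comm]
      _ ≤ _ := Finset.card_nsmul_le_sum _ _ _ (fun k hk => hfib k (Finset.mem_of_mem_erase hk))
  have hcard := Finset.card_erase_of_mem hk₀m
  have hpos : 0 < (Finset.image σ Finset.univ).card := Finset.card_pos.2 ⟨k₀, hk₀m⟩
  omega

def svwEmb (R : Finset ℕ) (t : ℕ) : ℕ :=
  if h : t < R.card then R.orderEmbOfFin rfl ⟨t, h⟩ else 0

lemma svwEmb_mem {R : Finset ℕ} {t : ℕ} (h : t < R.card) : svwEmb R t ∈ R := by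
  rw [svwEmb, dif_pos h]; exact R.orderEmbOfFin_mem rfl _

lemma svwEmb_lt {R : Finset ℕ} {a b : ℕ} (hab : a < b) (hb : b < R.card) :
    svwEmb R a < svwEmb R b := by
  rw [svwEmb, svwEmb, dif_pos (lt_trans hab hb), dif_pos hb]
  exact (R.orderEmbOfFin rfl).strictMono (show (⟨a, lt_trans hab hb⟩ : Fin R.card) < ⟨b, hb⟩ from hab)

lemma svwEmb_injOn {R : Finset ℕ} {a b : ℕ} (ha : a < R.card) (hb : b < R.card)
    (h : svwEmb R a = svwEmb R b) : a = b := by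
  rcases lt_trichotomy a b with hlt | heq | hgt
  · exact absurd h (ne_of_lt (svwEmb_lt hlt hb))
  · exact heq
  · exact absurd h.symm (ne_of_lt (svwEmb_lt hgt ha))

lemma svwEmb_exists {R : Finset ℕ} {x : ℕ} (hx : x ∈ R) :
    ∃ t, t < R.card ∧ svwEmb R t = x := by
  have : x ∈ Set.range (R.orderEmbOfFin rfl) := by
    rw [Finset.range_orderEmbOfFin]; exact hx
  obtain ⟨i, hi⟩ := this
  exact ⟨i, i.isLt, by rw [svwEmb, dif_pos i.isLt]; simpa using hi⟩

lemma svwEmb_image {R : Finset ℕ} {m : ℕ} (h : R.card = m) :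
    Finset.image (fun k : Fin m => svwEmb R (k : ℕ)) Finset.univ = R := by
  apply Finset.Subset.antisymm
  · intro x hx
    rw [Finset.mem_image] at hx
    obtain ⟨k, _, rfl⟩ := hx
    exact svwEmb_mem (by rw [h]; exact k.isLt)
  · intro x hx
    obtain ⟨t, ht, rfl⟩ := svwEmb_exists hx
    exact Finset.mem_image.2 ⟨⟨t, h ▸ ht⟩, Finset.mem_univ _, rfl⟩

lemma svw_pair_sum {M : Type*} [AddCommMonoid M] {n m N : ℕ} (hnm : n = 2 * m)
    (F : (Fin n → ℕ) → M) :
    ∑ p ∈ ((Finset.Icc 1 N).powersetCard m) ×ˢ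
        (Finset.univ.filter fun τ : Fin n → Fin m =>
          ∀ k : Fin m, (Finset.univ.filter fun i => τ i = k).card = 2),
      F (fun i => svwEmb p.1 (p.2 i))
    = ∑ σ ∈ (Fintype.piFinset fun _ : Fin n => Finset.Icc 1 N).filter
        (fun σ : Fin n → ℕ => ∀ k ∈ Finset.image σ Finset.univ,
          (Finset.univ.filter fun i => σ i = k).card = 2),
      F σ := by
  refine Finset.sum_bij (fun p _ => fun i => svwEmb p.1 (p.2 i)) ?_ ?_ ?_ ?_
  · rintro ⟨R, τ⟩ hp
    rw [Finset.mem_product, Finset.mem_powersetCard] at hp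
    obtain ⟨⟨hRsub, hRcard⟩, hτ⟩ := hp
    simp only [Finset.mem_filter, Finset.mem_univ, true_and] at hτ
    rw [Finset.mem_filter]
    constructor
    · rw [Fintype.mem_piFinset]
      intro i
      exact hRsub (svwEmb_mem (by rw [hRcard]; exact (τ i).isLt))
    · intro k hk
      rw [Finset.mem_image] at hk
      obtain ⟨i₀, -, rfl⟩ := hk
      have : (Finset.univ.filter fun i => svwEmb R (τ i) = svwEmb R (τ i₀)) =
          (Finset.univ.filter fun i => τ i = τ i₀) := by
        apply Finset.filter_congr
        intro i _
        constructor
        · intro h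
          exact Fin.ext (svwEmb_injOn (by rw [hRcard]; exact (τ i).isLt)
            (by rw [hRcard]; exact (τ i₀).isLt) h)
        · intro h; exact congrArg _ (congrArg _ h)
      rw [this]
      exact hτ (τ i₀)
  · rintro ⟨R, τ⟩ hp ⟨R', τ'⟩ hp' heq
    rw [Finset.mem_product, Finset.mem_powersetCard] at hp hp'
    obtain ⟨⟨hRsub, hRcard⟩, hτ⟩ := hp
    obtain ⟨⟨hRsub', hRcard'⟩, hτ'⟩ := hp'
    simp only [Finset.mem_filter, Finset.mem_univ, true_and] at hτ hτ'
    have hsurj : Function.Surjective τ := by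
      intro k
      have := hτ k
      have hne : (Finset.univ.filter fun i => τ i = k).Nonempty := by
        rw [← Finset.card_pos, this]; omega
      obtain ⟨i, hi⟩ := hne
      exact ⟨i, (Finset.mem_filter.1 hi).2⟩
    have hsurj' : Function.Surjective τ' := by
      intro k
      have := hτ' k
      have hne : (Finset.univ.filter fun i => τ' i = k).Nonempty := by
        rw [← Finset.card_pos, this]; omega
      obtain ⟨i, hi⟩ := hne
      exact ⟨i, (Finset.mem_filter.1 hi).2⟩
    have hRim : Finset.image (fun i => svwEmb R (τ i)) Finset.univ = R := by
      rw [show (fun i => svwEmb R ((τ i : ℕ))) = (fun k : Fin m => svwEmb R (k : ℕ)) ∘ τ from rfl,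
        ← Finset.image_image, Finset.image_univ_of_surjective hsurj, svwEmb_image hRcard]
    have hRim' : Finset.image (fun i => svwEmb R' (τ' i)) Finset.univ = R' := by
      rw [show (fun i => svwEmb R' ((τ' i : ℕ))) = (fun k : Fin m => svwEmb R' (k : ℕ)) ∘ τ' from rfl,
        ← Finset.image_image, Finset.image_univ_of_surjective hsurj', svwEmb_image hRcard']
    have hRR : R = R' := by
      rw [← hRim, ← hRim']
      exact Finset.image_congr (fun i _ => congrFun heq i)
    subst hRR
    have hττ : τ = τ' := by
      funext i
      exact Fin.ext (svwEmb_injOn (by rw [hRcard]; exact (τ i).isLt)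
        (by rw [hRcard]; exact (τ' i).isLt) (congrFun heq i))
    rw [hττ]
  · intro σ hσ
    rw [Finset.mem_filter, Fintype.mem_piFinset] at hσ
    obtain ⟨hσmem, hσpair⟩ := hσ
    set R := Finset.image σ Finset.univ with hR
    have hcard : R.card = m := by
      have h2 : 2 * R.card = n := svw_card_image_pair σ hσpair
      omega
    have hex : ∀ i, ∃ t : Fin m, svwEmb R (t : ℕ) = σ i := by
      intro i
      obtain ⟨t, ht, hts⟩ := svwEmb_exists (Finset.mem_image_of_mem σ (Finset.mem_univ i))
      exact ⟨⟨t, by rw [← hcard]; exact ht⟩, hts⟩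
    choose τ hτ using hex
    have hfib : ∀ k : Fin m, (Finset.univ.filter fun i => τ i = k) =
        (Finset.univ.filter fun i => σ i = svwEmb R (k : ℕ)) := by
      intro k
      apply Finset.filter_congr
      intro i _
      constructor
      · intro h; rw [← hτ i, h]
      · intro h
        have : svwEmb R ((τ i : ℕ)) = svwEmb R ((k : ℕ)) := by rw [hτ i, h]
        exact Fin.ext (svwEmb_injOn (by rw [hcard]; exact (τ i).isLt)
          (by rw [hcard]; exact k.isLt) this)
    refine ⟨(R, τ), ?_, ?_⟩
    · rw [Finset.mem_product, Finset.mem_powersetCard]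
      refine ⟨⟨?_, hcard⟩, ?_⟩
      · intro x hx
        rw [hR, Finset.mem_image] at hx
        obtain ⟨i, _, rfl⟩ := hx
        exact hσmem i
      · rw [Finset.mem_filter]
        refine ⟨Finset.mem_univ _, fun k => ?_⟩
        rw [hfib k]
        exact hσpair _ (svwEmb_mem (by rw [hcard]; exact k.isLt))
    · funext i
      exact hτ i
  · intro p hp
    rfl

lemma svw_small_image_card {n m N : ℕ} (hm : 1 ≤ m) (hmN : m - 1 ≤ N) :
    (((Fintype.piFinset fun _ : Fin n => Finset.Icc 1 N)).filter
      (fun σ : Fin n → ℕ => (Finset.image σ Finset.univ).card < m)).card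
      ≤ (m - 1) ^ n * N ^ (m - 1) := by
  have hsub : (((Fintype.piFinset fun _ : Fin n => Finset.Icc 1 N)).filter
      (fun σ : Fin n → ℕ => (Finset.image σ Finset.univ).card < m)) ⊆
      ((Finset.Icc 1 N).powersetCard (m - 1)).biUnion
        (fun R => Fintype.piFinset fun _ : Fin n => R) := by
    intro σ hσ
    rw [Finset.mem_filter, Fintype.mem_piFinset] at hσ
    obtain ⟨hσmem, hσcard⟩ := hσ
    have himsub : Finset.image σ Finset.univ ⊆ Finset.Icc 1 N := by
      intro x hx
      rw [Finset.mem_image] at hx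
      obtain ⟨i, _, rfl⟩ := hx
      exact hσmem i
    obtain ⟨R, hR1, hR2, hR3⟩ := Finset.exists_subsuperset_card_eq (n := m - 1) himsub
      (by omega) (by rw [Nat.card_Icc]; omega)
    rw [Finset.mem_biUnion]
    refine ⟨R, Finset.mem_powersetCard.2 ⟨hR2, hR3⟩, ?_⟩
    rw [Fintype.mem_piFinset]
    exact fun i => hR1 (Finset.mem_image_of_mem σ (Finset.mem_univ i))
  calc _ ≤ _ := Finset.card_le_card hsub
    _ ≤ ∑ R ∈ (Finset.Icc 1 N).powersetCard (m - 1),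
          (Fintype.piFinset fun _ : Fin n => R).card := Finset.card_biUnion_le
    _ = ∑ R ∈ (Finset.Icc 1 N).powersetCard (m - 1), R.card ^ n := by
          refine Finset.sum_congr rfl fun R _ => ?_
          rw [Fintype.card_piFinset_const]
    _ = ∑ R ∈ (Finset.Icc 1 N).powersetCard (m - 1), (m - 1) ^ n := by
          refine Finset.sum_congr rfl fun R hR => ?_
          rw [(Finset.mem_powersetCard.1 hR).2]
    _ = ((Finset.Icc 1 N).powersetCard (m - 1)).card * (m - 1) ^ n := by
          rw [Finset.sum_const, smul_eq_mul]
    _ ≤ N ^ (m - 1) * (m - 1) ^ n := by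
          rw [Finset.card_powersetCard, Nat.card_Icc, Nat.add_sub_cancel]
          exact Nat.mul_le_mul_right _ (Nat.choose_le_pow _ _)
    _ = (m - 1) ^ n * N ^ (m - 1) := mul_comm _ _

lemma svw_ratio_tendsto (m : ℕ) :
    Tendsto (fun N : ℕ => (N.choose m : ℝ) / (N : ℝ) ^ m) atTop
      (nhds (1 / m.factorial)) := by
  have h1 : Tendsto (fun N : ℕ => (1 / m.factorial : ℝ) * ∏ i ∈ Finset.range m,
      (1 - (i : ℝ) / N)) atTop (nhds (1 / m.factorial)) := by
    have hprod : Tendsto (fun N : ℕ => ∏ i ∈ Finset.range m, (1 - (i : ℝ) / N)) atTop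
        (nhds (∏ _i ∈ Finset.range m, (1:ℝ))) := by
      refine tendsto_finset_prod _ fun i _ => ?_
      have := tendsto_const_div_atTop_nhds_zero_nat (i : ℝ)
      have := (tendsto_const_nhds (x := (1:ℝ)) (f := atTop)).sub this
      simpa using this
    rw [Finset.prod_const_one] at hprod
    simpa using (tendsto_const_nhds.mul hprod)
  apply h1.congr'
  filter_upwards [eventually_ge_atTop m, eventually_ge_atTop 1] with N hNm hN1
  have hcast : (N.choose m : ℝ) = (N.descFactorial m : ℝ) / m.factorial := by
    rw [Nat.descFactorial_eq_factorial_mul_choose]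
    push_cast
    field_simp
  have hdesc : (N.descFactorial m : ℝ) = ∏ i ∈ Finset.range m, ((N : ℝ) - i) := by
    rw [Nat.descFactorial_eq_prod_range]
    push_cast [Nat.cast_prod]
    refine Finset.prod_congr rfl fun i hi => ?_
    rw [Finset.mem_range] at hi
    have : i ≤ N := by omega
    push_cast [Nat.cast_sub this]
    ring
  have hN0 : (N : ℝ) ≠ 0 := by
    simp only [ne_eq, Nat.cast_eq_zero]; omega
  have hNm0 : ((N : ℝ)) ^ m ≠ 0 := pow_ne_zero _ hN0
  calc (1 / m.factorial : ℝ) * ∏ i ∈ Finset.range m, (1 - (i : ℝ) / N)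
      = (1 / m.factorial : ℝ) * ((∏ i ∈ Finset.range m, ((N : ℝ) - i)) / (N : ℝ) ^ m) := by
        congr 1
        rw [show ((N:ℝ))^m = ∏ _i ∈ Finset.range m, (N:ℝ) by
          rw [Finset.prod_const, Finset.card_range], ← Finset.prod_div_distrib]
        refine Finset.prod_congr rfl fun i hi => ?_
        field_simp
    _ = (N.choose m : ℝ) / (N : ℝ) ^ m := by
        rw [hcast, hdesc]
        ring

/-- **Speicher–von Waldenfels central limit theorem, even case.** -/
theorem speicher_von_waldenfels_CLT_even
    {A : Type*} [Ring A] [StarRing A] [Algebra ℂ A] [StarModule ℂ A]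
    (φ : A →ₗ[ℂ] ℂ)
    (hφ1 : φ 1 = 1)
    (hφpos : ∀ a : A, 0 ≤ φ (star a * a))
    {J : Type*} (b : J → ℕ → A)
    (hstar : ∀ j : J, ∃ j' : J, ∀ n : ℕ, star (b j n) = b j' n)
    -- (i) singleton condition
    (hi : ∀ (n : ℕ), 1 ≤ n → ∀ (j : Fin n → J) (σ : Fin n → ℕ),
      (∃ k : ℕ, (Finset.univ.filter (fun i => σ i = k)).card = 1) →
      φ ((List.ofFn fun i => b (j i) (σ i)).prod) = 0)
    -- (ii) uniform boundedness
    (hii : ∀ (n : ℕ), 1 ≤ n → ∃ C : ℝ, ∀ (j : Fin n → J) (σ : Fin n → ℕ),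
      ‖φ ((List.ofFn fun i => b (j i) (σ i)).prod)‖ ≤ C)
    -- (iii) invariance of second order correlations under order preserving injections
    (hiii : ∀ (n : ℕ) (j : Fin n → J) (σ : Fin n → ℕ),
      (∀ k ∈ Set.range σ, (Finset.univ.filter (fun i => σ i = k)).card = 2) →
      ∀ ϑ : ℕ → ℕ, StrictMono ϑ →
        φ ((List.ofFn fun i => b (j i) (ϑ (σ i))).prod) =
          φ ((List.ofFn fun i => b (j i) (σ i)).prod)) :
    ∀ (n : ℕ), Even n → 2 ≤ n → ∀ j : Fin n → J,
      Tendsto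
        (fun N : ℕ => φ ((List.ofFn fun i : Fin n =>
          ((Real.sqrt N : ℂ))⁻¹ • ∑ m ∈ Finset.Icc 1 N, b (j i) m).prod))
        atTop
        (nhds (((Nat.factorial (n / 2) : ℂ))⁻¹ *
          ∑ σ ∈ Finset.univ.filter
              (fun σ : Fin n → Fin (n / 2) =>
                ∀ k : Fin (n / 2), (Finset.univ.filter (fun i => σ i = k)).card = 2),
            φ ((List.ofFn fun i => b (j i) ((σ i : ℕ) + 1)).prod))) := by
  classical
  intro n hne hn2 j
  obtain ⟨r, hr⟩ := hne
  have hm1 : 1 ≤ n / 2 := by omega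
  set m : ℕ := n / 2 with hm
  have hnm : n = 2 * m := by omega
  set T : ℂ := ∑ σ ∈ Finset.univ.filter
      (fun σ : Fin n → Fin m =>
        ∀ k : Fin m, (Finset.univ.filter (fun i => σ i = k)).card = 2),
    φ ((List.ofFn fun i => b (j i) ((σ i : ℕ) + 1)).prod) with hT
  -- abbreviations
  set Φ : (Fin n → ℕ) → ℂ := fun σ => φ ((List.ofFn fun i => b (j i) (σ i)).prod) with hΦ
  set qP : (Fin n → ℕ) → Prop := fun σ => ∀ k ∈ Finset.image σ Finset.univ,
    (Finset.univ.filter fun i => σ i = k).card = 2 with hqP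
  set sg : (Fin n → ℕ) → Prop := fun σ =>
    ∃ k : ℕ, (Finset.univ.filter fun i => σ i = k).card = 1 with hsg
  set Ebad : ℕ → ℂ := fun N =>
    ∑ σ ∈ (((Fintype.piFinset fun _ : Fin n => Finset.Icc 1 N)).filter
        (fun σ => ¬ qP σ)).filter (fun σ => ¬ sg σ), Φ σ with hEbad
  -- the key algebraic identity
  have key : ∀ N : ℕ,
      φ ((List.ofFn fun i : Fin n =>
        ((Real.sqrt N : ℂ))⁻¹ • ∑ v ∈ Finset.Icc 1 N, b (j i) v).prod)
      = (((N : ℂ)) ^ m)⁻¹ * ((N.choose m : ℂ) * T + Ebad N) := by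
    intro N
    have hc : ((Real.sqrt N : ℂ))⁻¹ ^ n = (((N : ℂ)) ^ m)⁻¹ := by
      have hsq : ((Real.sqrt N : ℂ)) ^ 2 = ((N : ℂ)) := by
        rw [← Complex.ofReal_pow, Real.sq_sqrt (Nat.cast_nonneg N), Complex.ofReal_natCast]
      rw [inv_pow]
      congr 1
      rw [hnm, pow_mul, hsq]
    rw [svw_prod_ofFn_smul ((Real.sqrt N : ℂ))⁻¹ n
      (fun i => ∑ v ∈ Finset.Icc 1 N, b (j i) v), map_smul, smul_eq_mul, hc,
      svw_prod_ofFn_sum n (Finset.Icc 1 N) (fun i v => b (j i) v), map_sum]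
    congr 1
    -- split the sum
    rw [← Finset.sum_filter_add_sum_filter_not
      (Fintype.piFinset fun _ : Fin n => Finset.Icc 1 N) qP (fun σ => Φ σ)]
    rw [← Finset.sum_filter_add_sum_filter_not
      (((Fintype.piFinset fun _ : Fin n => Finset.Icc 1 N)).filter (fun σ => ¬ qP σ))
      sg (fun σ => Φ σ)]
    have hz : ∑ σ ∈ ((((Fintype.piFinset fun _ : Fin n => Finset.Icc 1 N)).filter
        (fun σ => ¬ qP σ)).filter (fun σ => sg σ)), Φ σ = 0 := by
      refine Finset.sum_eq_zero fun σ hσ => ?_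
      exact hi n (by omega) j σ (Finset.mem_filter.1 hσ).2
    have hpair : ∑ σ ∈ (((Fintype.piFinset fun _ : Fin n => Finset.Icc 1 N)).filter
        (fun σ => qP σ)), Φ σ = (N.choose m : ℂ) * T := by
      rw [← svw_pair_sum hnm Φ]
      have hcongr : ∀ p ∈ ((Finset.Icc 1 N).powersetCard m) ×ˢ
          (Finset.univ.filter fun τ : Fin n → Fin m =>
            ∀ k : Fin m, (Finset.univ.filter fun i => τ i = k).card = 2),
          Φ (fun i => svwEmb p.1 (p.2 i)) =
            φ ((List.ofFn fun i => b (j i) ((p.2 i : ℕ) + 1)).prod) := by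
        rintro ⟨R, τ⟩ hp
        rw [Finset.mem_product, Finset.mem_powersetCard] at hp
        obtain ⟨⟨hRsub, hRcard⟩, hτ⟩ := hp
        replace hRsub : R ⊆ Finset.Icc 1 N := hRsub
        replace hRcard : R.card = m := hRcard
        simp only [Finset.mem_filter, Finset.mem_univ, true_and] at hτ
        have hϑ : StrictMono (svwTheta (svwEmb R) m) := by
          refine svwTheta_strictMono hm1 (fun a c hac hcm => svwEmb_lt hac (by omega)) ?_
          intro a ha
          have := hRsub (svwEmb_mem (R := R) (t := a) (by omega))
          exact (Finset.mem_Icc.1 this).1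
        have hpairσ : ∀ k ∈ Set.range (fun i => (τ i : ℕ) + 1),
            (Finset.univ.filter fun i => (τ i : ℕ) + 1 = k).card = 2 := by
          rintro k ⟨i₀, rfl⟩
          have : (Finset.univ.filter fun i => (τ i : ℕ) + 1 = (τ i₀ : ℕ) + 1) =
              (Finset.univ.filter fun i => τ i = τ i₀) := by
            apply Finset.filter_congr
            intro i _
            constructor
            · intro h; exact Fin.ext (by omega)
            · intro h; rw [h]
          rw [this]
          exact hτ (τ i₀)
        have := hiii n j (fun i => (τ i : ℕ) + 1) hpairσ (svwTheta (svwEmb R) m) hϑ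
        have heval : ∀ i : Fin n, svwTheta (svwEmb R) m ((τ i : ℕ) + 1) = svwEmb R (τ i) := by
          intro i
          rw [svwTheta_eval _ _ _ (by omega) (by have := (τ i).isLt; omega)]
          simp
        rw [hΦ]
        simp only [heval] at this
        exact this
      rw [Finset.sum_congr rfl hcongr, Finset.sum_product]
      simp only [Finset.sum_const]
      rw [Finset.card_powersetCard, Nat.card_Icc, Nat.add_sub_cancel, nsmul_eq_mul, ← hT]
    rw [hz, hpair, zero_add]
  -- the bound on the bad sum
  obtain ⟨C, hC⟩ := hii n (by omega)
  have hC0 : 0 ≤ C := le_trans (norm_nonneg _) (hC j (fun _ => 0))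
  have hEbound : ∀ N : ℕ, m ≤ N →
      ‖Ebad N‖ ≤ ((m - 1) ^ n * N ^ (m - 1) : ℕ) * C := by
    intro N hN
    have hsub : ((((Fintype.piFinset fun _ : Fin n => Finset.Icc 1 N)).filter
        (fun σ => ¬ qP σ)).filter (fun σ => ¬ sg σ)) ⊆
        (((Fintype.piFinset fun _ : Fin n => Finset.Icc 1 N)).filter
          (fun σ : Fin n → ℕ => (Finset.image σ Finset.univ).card < m)) := by
      intro σ hσ
      rw [Finset.mem_filter, Finset.mem_filter] at hσ
      obtain ⟨⟨hσ1, hσ2⟩, hσ3⟩ := hσ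
      rw [Finset.mem_filter]
      refine ⟨hσ1, ?_⟩
      have := svw_card_image_bad σ hσ3 hσ2
      omega
    calc ‖Ebad N‖ ≤ ∑ σ ∈ ((((Fintype.piFinset fun _ : Fin n => Finset.Icc 1 N)).filter
          (fun σ => ¬ qP σ)).filter (fun σ => ¬ sg σ)), ‖Φ σ‖ := norm_sum_le _ _
      _ ≤ ((((Fintype.piFinset fun _ : Fin n => Finset.Icc 1 N)).filter
          (fun σ => ¬ qP σ)).filter (fun σ => ¬ sg σ)).card • C := by
          refine Finset.sum_le_card_nsmul _ _ _ fun σ _ => ?_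
          rw [hΦ]
          exact hC j σ
      _ ≤ ((m - 1) ^ n * N ^ (m - 1) : ℕ) * C := by
          rw [nsmul_eq_mul]
          refine mul_le_mul_of_nonneg_right ?_ hC0
          have h1 := Finset.card_le_card hsub
          have h2 := svw_small_image_card (n := n) (m := m) (N := N) hm1 (by omega)
          exact_mod_cast le_trans (Nat.cast_le.2 h1) (Nat.cast_le.2 h2)
  -- pass to the limit
  have hlim1 : Tendsto (fun N : ℕ => ((N.choose m : ℂ) / ((N : ℂ)) ^ m) * T) atTop
      (nhds (((m.factorial : ℂ))⁻¹ * T)) := by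
    have h1 := svw_ratio_tendsto m
    have h2 : Tendsto (fun N : ℕ => (((N.choose m : ℝ) / (N : ℝ) ^ m : ℝ) : ℂ)) atTop
        (nhds (((1 / m.factorial : ℝ) : ℂ))) :=
      (Complex.continuous_ofReal.tendsto _).comp h1
    have h3 : (fun N : ℕ => (((N.choose m : ℝ) / (N : ℝ) ^ m : ℝ) : ℂ)) =
        (fun N : ℕ => (N.choose m : ℂ) / ((N : ℂ)) ^ m) := by
      funext N; push_cast; ring
    have h4 : (((1 / m.factorial : ℝ) : ℂ)) = ((m.factorial : ℂ))⁻¹ := by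
      push_cast; rw [one_div]
    rw [h3, h4] at h2
    exact h2.mul_const T
  have hlim2 : Tendsto (fun N : ℕ => (((N : ℂ)) ^ m)⁻¹ * Ebad N) atTop (nhds 0) := by
    apply squeeze_zero_norm' (a := fun N : ℕ => ((m - 1) ^ n : ℕ) * C / N)
    · filter_upwards [eventually_ge_atTop m, eventually_ge_atTop 1] with N hNm hN1
      have hN0 : (0 : ℝ) < (N : ℝ) := by exact_mod_cast hN1
      have hnorm : ‖(((N : ℂ)) ^ m)⁻¹ * Ebad N‖ = (((N : ℝ)) ^ m)⁻¹ * ‖Ebad N‖ := by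
        rw [norm_mul, norm_inv, norm_pow, Complex.norm_natCast]
      rw [hnorm]
      have hb := hEbound N hNm
      have hpow : ((N : ℝ)) ^ m = ((N : ℝ)) ^ (m - 1) * N := by
        rw [← pow_succ]
        congr 1
        omega
      calc (((N : ℝ)) ^ m)⁻¹ * ‖Ebad N‖
          ≤ (((N : ℝ)) ^ m)⁻¹ * (((m - 1) ^ n * N ^ (m - 1) : ℕ) * C) := by
            refine mul_le_mul_of_nonneg_left hb (by positivity)
        _ = ((m - 1) ^ n : ℕ) * C / N := by
            push_cast
            rw [hpow]
            field_simp
    · exact tendsto_const_div_atTop_nhds_zero_nat _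
  have hfinal : Tendsto (fun N : ℕ =>
      ((N.choose m : ℂ) / ((N : ℂ)) ^ m) * T + (((N : ℂ)) ^ m)⁻¹ * Ebad N) atTop
      (nhds (((m.factorial : ℂ))⁻¹ * T)) := by
    have := hlim1.add hlim2
    rwa [add_zero] at this
  refine hfinal.congr fun N => ?_
  rw [key N]
  ring
end

section
/- (Boolean algebraic CLT, one-variable case.) Let (A, φ) be a quantum probability space and a : ℕ → A a sequence of self-adjoint elements which are identically distributed (φ(a_n^m) = φ(a_1^m) for all n, m) and boolean independent in the following sense: for every n ≥ 1, every σ : {1,…,n} → ℕ with σ(k) ≠ σ(k+1) for 1 ≤ k < n, and every choice of elements c_1, …, c_n where c_i belongs to the non-unital subalgebra of A generated by a_{σ(i)}, one has φ(c_1 ⋯ c_n) = φ(c_1) ⋯ φ(c_n). Assume φ(a_1) = 0 and φ(a_1^2) = 1. Then for s_N := (a_1 + ⋯ + a_N)/√N and every m ∈ ℕ: φ(s_N^m) → 0 as N → ∞ if m is odd, and φ(s_N^m) → 1 as N → ∞ if m is even; these are the moments of the symmetric Bernoulli measure (δ_{−1} + δ_{1})/2. -/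
/-!
Write `S = a 1 + ⋯ + a N` and `μ k = φ (a 1 ^ k)`. Boolean independence lets `φ` factor over
alternating products of blocks. Multiplying on the left by a letter `a y` either merges it into the
preceding block or starts a new one, so for every `d` in the algebra generated by the `a i`,
`φ (c * (a x * d)) = φ c * φ (a x * d)` whenever `c` is generated by `a v` with `v ≠ x`.
Expanding one factor of `S` in `φ (a v ^ k * S ^ (m + 1))` then gives a recursion in `m` that does
not depend on `v`, and `φ (S ^ (m + 1)) = N * φ (a v * S ^ m)`. Since `μ 1 = 0` and `μ 2 = 1`,
induction on this recursion shows that `φ (a v ^ k * S ^ m) / N ^ (m / 2)` converges, to `μ k` for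
even `m` and to `1` for odd `m` and `k = 1`, while `φ (a v * S ^ m) = O(N ^ (m / 2 - 1))` for even
`m > 0`. Scaling by `N ^ (-m / 2)` then gives the limits `0` and `1`.
-/

open Filter Finset
open scoped ComplexOrder Topology

namespace BooleanCLT

section Algebra

variable {R A : Type*} [CommRing R] [Ring A] [Algebra R A] (φ : A →ₗ[R] R) (a : ℕ → A)

theorem pow_mem_adjoin_singleton (x : A) {k : ℕ} (hk : 1 ≤ k) :
    x ^ k ∈ NonUnitalAlgebra.adjoin R {x} := by
  induction k, hk using Nat.le_induction with
  | base => rw [pow_one]; exact NonUnitalAlgebra.self_mem_adjoin_singleton R x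
  | succ k _ ih =>
    exact pow_succ x k ▸ mul_mem ih (NonUnitalAlgebra.self_mem_adjoin_singleton R x)

def IsBooleanIndependent : Prop :=
  ∀ (n : ℕ), 1 ≤ n → ∀ σ : Fin n → ℕ, (∀ i, 1 ≤ σ i) →
    (∀ (i : Fin n) (h : (i : ℕ) + 1 < n), σ i ≠ σ ⟨(i : ℕ) + 1, h⟩) →
    ∀ c : Fin n → A,
      (∀ i, c i ∈ NonUnitalAlgebra.adjoin R ({a (σ i)} : Set A)) →
      φ ((List.ofFn c).prod) = ∏ i, φ (c i)

variable (R) in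
def IsAlternatingBlocks (l : List (ℕ × A)) : Prop :=
  (∀ p ∈ l, 1 ≤ p.1 ∧ p.2 ∈ NonUnitalAlgebra.adjoin R {a p.1}) ∧
    l.IsChain fun p q => p.1 ≠ q.1

variable {φ a}

theorem IsBooleanIndependent.map_list_prod (h : IsBooleanIndependent φ a) {l : List (ℕ × A)}
    (hne : l ≠ []) (hl : IsAlternatingBlocks R a l) :
    φ (l.map Prod.snd).prod = (l.map fun p => φ p.2).prod := by
  have hchain := List.isChain_iff_getElem.mp hl.2
  have key := h l.length (List.length_pos_iff.mpr hne) (fun i => l[(i : ℕ)].1)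
    (fun i => (hl.1 _ (List.getElem_mem _)).1)
    (fun i => hchain i) (fun i => l[(i : ℕ)].2) (fun i => (hl.1 _ (List.getElem_mem _)).2)
  rwa [List.ofFn_getElem_eq_map, ← List.prod_ofFn, List.ofFn_getElem_eq_map l fun p => φ p.2]
    at key

theorem isAlternatingBlocks_append_singleton {l : List (ℕ × A)} {x : ℕ} {c : A} :
    IsAlternatingBlocks R a (l ++ [(x, c)]) ↔ IsAlternatingBlocks R a l ∧ 1 ≤ x ∧
      c ∈ NonUnitalAlgebra.adjoin R {a x} ∧ ∀ p ∈ l.getLast?, p.1 ≠ x := by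
  simp only [IsAlternatingBlocks, List.mem_append, List.mem_singleton, or_imp, forall_and,
    forall_eq, forall_eq', List.isChain_append, List.isChain_singleton, List.head?_cons,
    Option.mem_some_iff, true_and]
  tauto

theorem isAlternatingBlocks_singleton {x : ℕ} {c : A} :
    IsAlternatingBlocks R a [(x, c)] ↔ 1 ≤ x ∧ c ∈ NonUnitalAlgebra.adjoin R {a x} := by
  simp [IsAlternatingBlocks]

variable (φ a) in
def blockFactorSubmodule : Submodule R A where
  carrier := {d | ∀ (l : List (ℕ × A)) (x : ℕ) (c : A),
    IsAlternatingBlocks R a (l ++ [(x, c)]) →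
      φ ((l.map Prod.snd).prod * c * d) = (l.map fun p => φ p.2).prod * φ (c * d)}
  add_mem' hd he l x c hl := by simp only [mul_add, map_add, hd l x c hl, he l x c hl]
  zero_mem' l x c _ := by simp
  smul_mem' r d hd l x c hl := by
    simp only [mul_smul_comm, map_smul, hd l x c hl, smul_eq_mul]
    ring

theorem IsBooleanIndependent.one_mem_blockFactorSubmodule (h : IsBooleanIndependent φ a) :
    1 ∈ blockFactorSubmodule φ a := by
  intro l x c hl
  simpa using h.map_list_prod (by simp) hl

theorem mul_mem_blockFactorSubmodule {y : ℕ} (hy : 1 ≤ y) {d : A}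
    (hd : d ∈ blockFactorSubmodule φ a) :
    a y * d ∈ blockFactorSubmodule φ a := by
  intro l x c hlxc
  obtain ⟨hl, hx, hc, hlast⟩ := isAlternatingBlocks_append_singleton.mp hlxc
  by_cases hyx : y = x
  · subst hyx
    have hca : c * a y ∈ NonUnitalAlgebra.adjoin R {a y} :=
      mul_mem hc (NonUnitalAlgebra.self_mem_adjoin_singleton R _)
    simpa only [mul_assoc] using
      hd l y (c * a y) (isAlternatingBlocks_append_singleton.mpr ⟨hl, hx, hca, hlast⟩)
  · have hxc : IsAlternatingBlocks R a [(x, c)] := isAlternatingBlocks_singleton.mpr ⟨hx, hc⟩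
    have hlxcy := isAlternatingBlocks_append_singleton.mpr
      ⟨hlxc, hy, NonUnitalAlgebra.self_mem_adjoin_singleton R _, by simpa using Ne.symm hyx⟩
    have hxcy := isAlternatingBlocks_append_singleton.mpr
      ⟨hxc, hy, NonUnitalAlgebra.self_mem_adjoin_singleton R _, by simpa using Ne.symm hyx⟩
    have hsplit := hd _ y (a y) hlxcy
    have hsplit' := hd _ y (a y) hxcy
    simp only [List.map_append, List.map_cons, List.map_nil, List.prod_append, List.prod_cons,
      List.prod_nil, mul_one] at hsplit hsplit'
    rw [← mul_assoc, hsplit, ← mul_assoc, hsplit', mul_assoc]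

theorem IsBooleanIndependent.pow_sum_mem_blockFactorSubmodule (h : IsBooleanIndependent φ a)
    {s : Finset ℕ} (hs : ∀ i ∈ s, 1 ≤ i) (m : ℕ) :
    (∑ i ∈ s, a i) ^ m ∈ blockFactorSubmodule φ a := by
  induction m with
  | zero => rw [pow_zero]; exact h.one_mem_blockFactorSubmodule
  | succ m ih =>
    rw [pow_succ', Finset.sum_mul]
    exact Submodule.sum_mem _ fun i hi => mul_mem_blockFactorSubmodule (hs i hi) ih

theorem IsBooleanIndependent.map_mul_mul_pow_sum (h : IsBooleanIndependent φ a)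
    {s : Finset ℕ} (hs : ∀ i ∈ s, 1 ≤ i) {v x : ℕ} {c : A} (hv : 1 ≤ v)
    (hc : c ∈ NonUnitalAlgebra.adjoin R {a v}) (hx : 1 ≤ x) (hxv : x ≠ v) (m : ℕ) :
    φ (c * (a x * (∑ i ∈ s, a i) ^ m)) = φ c * φ (a x * (∑ i ∈ s, a i) ^ m) := by
  have hvx := isAlternatingBlocks_append_singleton.mpr
    ⟨isAlternatingBlocks_singleton.mpr ⟨hv, hc⟩, hx,
      NonUnitalAlgebra.self_mem_adjoin_singleton R _, by simpa using hxv.symm⟩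
  simpa [mul_assoc] using h.pow_sum_mem_blockFactorSubmodule hs m [(v, c)] x (a x) hvx

/-- The value of `φ (a v ^ k * (a 1 + ⋯ + a N) ^ m)`: in the first factor of the power, `a v`
merges with `a v ^ k`, while each of the other `N - 1` letters splits off the factor `μ k`. -/
def mixedMoment (μ : ℕ → R) : ℕ → ℕ → ℕ → R
  | 0, k, _ => μ k
  | m + 1, k, N => mixedMoment μ m (k + 1) N + ((N : R) - 1) * μ k * mixedMoment μ m 1 N

theorem IsBooleanIndependent.map_pow_mul_pow_sum (h : IsBooleanIndependent φ a)
    (hid : ∀ n, 1 ≤ n → ∀ k, φ (a n ^ k) = φ (a 1 ^ k)) {s : Finset ℕ} (hs : ∀ i ∈ s, 1 ≤ i)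
    (m : ℕ) : ∀ v ∈ s, ∀ k, 1 ≤ k →
      φ (a v ^ k * (∑ i ∈ s, a i) ^ m) = mixedMoment (fun k => φ (a 1 ^ k)) m k #s := by
  induction m with
  | zero => intro v hv k _; simpa [mixedMoment] using hid v (hs v hv) k
  | succ m ih =>
    intro v hv k hk
    have hsplit : ∀ x ∈ s.erase v, φ (a v ^ k * (a x * (∑ i ∈ s, a i) ^ m)) =
        φ (a 1 ^ k) * mixedMoment (fun k => φ (a 1 ^ k)) m 1 #s := by
      intro x hx
      obtain ⟨hxv, hxs⟩ := mem_erase.mp hx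
      rw [h.map_mul_mul_pow_sum hs (hs v hv) (pow_mem_adjoin_singleton _ hk) (hs x hxs) hxv,
        hid v (hs v hv), ← ih x hxs 1 le_rfl, pow_one]
    calc φ (a v ^ k * (∑ i ∈ s, a i) ^ (m + 1))
        = ∑ x ∈ s, φ (a v ^ k * (a x * (∑ i ∈ s, a i) ^ m)) := by
          rw [pow_succ', Finset.sum_mul, Finset.mul_sum, map_sum]
      _ = φ (a v ^ (k + 1) * (∑ i ∈ s, a i) ^ m) +
            ∑ x ∈ s.erase v, φ (a v ^ k * (a x * (∑ i ∈ s, a i) ^ m)) := by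
          rw [← Finset.add_sum_erase _ _ hv, ← mul_assoc, ← pow_succ]
      _ = _ := by
          rw [ih v hv (k + 1) (by omega), Finset.sum_congr rfl hsplit, sum_const,
            card_erase_of_mem hv, nsmul_eq_mul, Nat.cast_pred (card_pos.mpr ⟨v, hv⟩),
            mixedMoment]
          ring

theorem IsBooleanIndependent.map_pow_sum_succ (h : IsBooleanIndependent φ a)
    (hid : ∀ n, 1 ≤ n → ∀ k, φ (a n ^ k) = φ (a 1 ^ k)) {s : Finset ℕ} (hs : ∀ i ∈ s, 1 ≤ i)
    (m : ℕ) :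
    φ ((∑ i ∈ s, a i) ^ (m + 1)) = #s * mixedMoment (fun k => φ (a 1 ^ k)) m 1 #s := by
  rw [pow_succ', Finset.sum_mul, map_sum, sum_congr rfl fun v hv => by
    simpa using h.map_pow_mul_pow_sum hid hs m v hv 1 le_rfl, sum_const, nsmul_eq_mul]

end Algebra

section Asymptotics

variable {𝕜 : Type*} [RCLike 𝕜] {μ : ℕ → 𝕜}

theorem tendsto_mixedMoment_odd {j : ℕ} {γ : 𝕜}
    (heven : ∀ k, Tendsto (fun N : ℕ => mixedMoment μ (2 * j) k N / N ^ j) atTop (𝓝 (μ k)))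
    (hγ : Tendsto (fun N : ℕ => N * mixedMoment μ (2 * j) 1 N / N ^ j) atTop (𝓝 γ)) (k : ℕ) :
    Tendsto (fun N : ℕ => mixedMoment μ (2 * j + 1) k N / N ^ j) atTop
      (𝓝 (μ (k + 1) + μ k * γ)) := by
  have hlim := (heven (k + 1)).add ((tendsto_const_nhds (x := μ k)).mul
    (((tendsto_const_nhds (x := (1 : 𝕜))).sub tendsto_inv_atTop_nhds_zero_nat).mul hγ))
  rw [sub_zero, one_mul] at hlim
  refine hlim.congr' ?_
  filter_upwards [eventually_ne_atTop 0] with N hN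
  simp only [mixedMoment]
  field_simp

theorem tendsto_mixedMoment_even (h1 : μ 1 = 0) (h2 : μ 2 = 1) (j : ℕ) :
    (∀ k, Tendsto (fun N : ℕ => mixedMoment μ (2 * j) k N / N ^ j) atTop (𝓝 (μ k))) ∧
      ∃ γ, Tendsto (fun N : ℕ => N * mixedMoment μ (2 * j) 1 N / N ^ j) atTop (𝓝 γ) := by
  induction j with
  | zero => exact ⟨fun k => by simp [mixedMoment], 0, by simp [mixedMoment, h1]⟩
  | succ j ih =>
    obtain ⟨heven, γ, hγ⟩ := ih
    have hodd := tendsto_mixedMoment_odd heven hγ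
    refine ⟨fun k => ?_, _, (hodd 2).congr' ?_⟩
    · have hlim := ((hodd (k + 1)).mul (tendsto_inv_atTop_nhds_zero_nat (𝕜 := 𝕜))).add
        ((tendsto_const_nhds (x := μ k)).mul
          (((tendsto_const_nhds (x := (1 : 𝕜))).sub tendsto_inv_atTop_nhds_zero_nat).mul
            (hodd 1)))
      rw [mul_zero, zero_add, sub_zero, one_mul, h1, h2, zero_mul, add_zero, mul_one] at hlim
      refine hlim.congr' ?_
      filter_upwards [eventually_ne_atTop 0] with N hN
      rw [show 2 * (j + 1) = 2 * j + 1 + 1 by ring]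
      simp only [mixedMoment]
      field_simp
      ring
    · filter_upwards [eventually_ne_atTop 0] with N hN
      rw [show 2 * (j + 1) = 2 * j + 1 + 1 by ring]
      simp only [mixedMoment, h1]
      field_simp
      ring

theorem tendsto_inv_sqrt_natCast :
    Tendsto (fun N : ℕ => ((Real.sqrt N : ℂ))⁻¹) atTop (𝓝 0) := by
  have hreal : Tendsto (fun N : ℕ => (Real.sqrt N)⁻¹) atTop (𝓝 0) :=
    (Real.tendsto_sqrt_atTop.comp tendsto_natCast_atTop_atTop).inv_tendsto_atTop
  simpa [Function.comp_def] using (Complex.continuous_ofReal.tendsto 0).comp hreal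

theorem inv_sqrt_natCast_pow_two_mul (N j : ℕ) :
    ((Real.sqrt N : ℂ))⁻¹ ^ (2 * j) = ((N : ℂ) ^ j)⁻¹ := by
  rw [pow_mul, inv_pow, ← Complex.ofReal_pow, Real.sq_sqrt (Nat.cast_nonneg _), inv_pow,
    Complex.ofReal_natCast]

theorem tendsto_inv_sqrt_pow_mul_mixedMoment_odd {μ : ℕ → ℂ} (h1 : μ 1 = 0) (h2 : μ 2 = 1)
    (j : ℕ) :
    Tendsto
      (fun N : ℕ => ((Real.sqrt N : ℂ))⁻¹ ^ (2 * j + 1) * (N * mixedMoment μ (2 * j) 1 N))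
      atTop (𝓝 0) := by
  obtain ⟨-, γ, hγ⟩ := tendsto_mixedMoment_even h1 h2 j
  have hlim := tendsto_inv_sqrt_natCast.mul hγ
  rw [zero_mul] at hlim
  refine hlim.congr fun N => ?_
  rw [pow_succ, inv_sqrt_natCast_pow_two_mul]
  ring

theorem tendsto_inv_sqrt_pow_mul_mixedMoment_even {μ : ℕ → ℂ} (h1 : μ 1 = 0) (h2 : μ 2 = 1)
    (j : ℕ) :
    Tendsto (fun N : ℕ =>
        ((Real.sqrt N : ℂ))⁻¹ ^ (2 * j + 1 + 1) * (N * mixedMoment μ (2 * j + 1) 1 N))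
      atTop (𝓝 1) := by
  obtain ⟨heven, γ, hγ⟩ := tendsto_mixedMoment_even h1 h2 j
  have hlim := tendsto_mixedMoment_odd heven hγ 1
  rw [h1, h2, zero_mul, add_zero] at hlim
  refine hlim.congr' ?_
  filter_upwards [eventually_ne_atTop 0] with N hN
  rw [show 2 * j + 1 + 1 = 2 * (j + 1) by ring, inv_sqrt_natCast_pow_two_mul]
  field_simp
  ring

end Asymptotics

end BooleanCLT

open BooleanCLT in
theorem algebraic_CLT_boolean_general
    {A : Type*} [Ring A] [Algebra ℂ A]
    (φ : A →ₗ[ℂ] ℂ)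
    (hφ1 : φ 1 = 1)
    (a : ℕ → A)
    (hid : ∀ n : ℕ, 1 ≤ n → ∀ m : ℕ, φ (a n ^ m) = φ (a 1 ^ m))
    -- boolean independence
    (hbool : ∀ (n : ℕ), 1 ≤ n → ∀ σ : Fin n → ℕ, (∀ i, 1 ≤ σ i) →
      (∀ (i : Fin n) (h : (i : ℕ) + 1 < n), σ i ≠ σ ⟨(i : ℕ) + 1, h⟩) →
      ∀ c : Fin n → A,
        (∀ i, c i ∈ NonUnitalAlgebra.adjoin ℂ ({a (σ i)} : Set A)) →
        φ ((List.ofFn c).prod) = ∏ i, φ (c i))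
    (hmean : φ (a 1) = 0)
    (hvar : φ (a 1 ^ 2) = 1) :
    ∀ m : ℕ,
      (Odd m →
        Tendsto
          (fun N : ℕ =>
            φ ((((Real.sqrt N : ℂ))⁻¹ • ∑ i ∈ Finset.Icc 1 N, a i) ^ m))
          atTop (nhds 0)) ∧
      (Even m →
        Tendsto
          (fun N : ℕ =>
            φ ((((Real.sqrt N : ℂ))⁻¹ • ∑ i ∈ Finset.Icc 1 N, a i) ^ m))
          atTop (nhds 1)) := by
  have hindep : IsBooleanIndependent φ a := hbool
  set μ : ℕ → ℂ := fun k => φ (a 1 ^ k)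
  have h1 : μ 1 = 0 := by simpa [μ] using hmean
  have h2 : μ 2 = 1 := hvar
  have hmoment (N m : ℕ) :
      φ ((((Real.sqrt N : ℂ))⁻¹ • ∑ i ∈ Finset.Icc 1 N, a i) ^ (m + 1)) =
        ((Real.sqrt N : ℂ))⁻¹ ^ (m + 1) * (N * mixedMoment μ m 1 N) := by
    rw [smul_pow, map_smul, smul_eq_mul, hindep.map_pow_sum_succ hid fun i hi => (mem_Icc.mp hi).1,
      Nat.card_Icc, Nat.add_sub_cancel]
  intro m
  refine ⟨fun ⟨j, hj⟩ => ?_, fun ⟨j, hj⟩ => ?_⟩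
  · subst hj
    simpa only [hmoment] using tendsto_inv_sqrt_pow_mul_mixedMoment_odd h1 h2 j
  · subst hj
    cases j with
    | zero => simp [hφ1]
    | succ j =>
      rw [show j + 1 + (j + 1) = 2 * j + 1 + 1 by ring]
      simpa only [hmoment] using tendsto_inv_sqrt_pow_mul_mixedMoment_even h1 h2 j

/-- **Boolean algebraic central limit theorem, one-variable case.** -/
theorem algebraic_CLT_boolean
    {A : Type*} [Ring A] [StarRing A] [Algebra ℂ A] [StarModule ℂ A]
    (φ : A →ₗ[ℂ] ℂ)
    (hφ1 : φ 1 = 1)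
    (hφpos : ∀ x : A, 0 ≤ φ (star x * x))
    (a : ℕ → A)
    (hsa : ∀ n : ℕ, 1 ≤ n → star (a n) = a n)
    (hid : ∀ n : ℕ, 1 ≤ n → ∀ m : ℕ, φ (a n ^ m) = φ (a 1 ^ m))
    -- boolean independence
    (hbool : ∀ (n : ℕ), 1 ≤ n → ∀ σ : Fin n → ℕ, (∀ i, 1 ≤ σ i) →
      (∀ (i : Fin n) (h : (i : ℕ) + 1 < n), σ i ≠ σ ⟨(i : ℕ) + 1, h⟩) →
      ∀ c : Fin n → A,
        (∀ i, c i ∈ NonUnitalAlgebra.adjoin ℂ ({a (σ i)} : Set A)) →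
        φ ((List.ofFn c).prod) = ∏ i, φ (c i))
    (hmean : φ (a 1) = 0)
    (hvar : φ (a 1 ^ 2) = 1) :
    ∀ m : ℕ,
      (Odd m →
        Tendsto
          (fun N : ℕ =>
            φ ((((Real.sqrt N : ℂ))⁻¹ • ∑ i ∈ Finset.Icc 1 N, a i) ^ m))
          atTop (nhds 0)) ∧
      (Even m →
        Tendsto
          (fun N : ℕ =>
            φ ((((Real.sqrt N : ℂ))⁻¹ • ∑ i ∈ Finset.Icc 1 N, a i) ^ m))
          atTop (nhds 1)) :=
  algebraic_CLT_boolean_general φ hφ1 a hid hbool hmean hvar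
end

section
/- (Moments of the Wigner semicircle law.) For every m ∈ ℕ: ∫_{−2}^{2} x^{2m} · (√(4 − x²)/(2π)) dx = Catalan(m) = (2m)!/((m+1)! m!), and ∫_{−2}^{2} x^{2m+1} · (√(4 − x²)/(2π)) dx = 0. -/
/-!
Substituting `x = 2 cos θ` turns the `2m`-th moment into
`(4 ^ (m + 1) / 2π) ∫₀^π cos^{2m} θ sin² θ dθ`. Writing `sin² = 1 - cos²`, the
Wallis reduction formula for `∫₀^π cos^n` gives
`∫₀^π cos^{2m} sin² = (∫₀^π cos^{2m}) / (2m + 2)` and `∫₀^π cos^{2m} = π C(2m, m) / 4 ^ m`,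
so the moment is `C(2m, m) / (m + 1) = Catalan(m)`.
The odd moments vanish because the integrand is odd.
-/

open Real Nat intervalIntegral

lemma integral_cos_pow_even (n : ℕ) :
    ∫ θ in (0 : ℝ)..π, cos θ ^ (2 * n) = π * n.centralBinom / 4 ^ n := by
  induction n with
  | zero => simp
  | succ k ih =>
    have hk : ((k : ℝ) + 1) * (k + 1).centralBinom = 2 * (2 * k + 1) * k.centralBinom := by
      exact_mod_cast succ_mul_centralBinom_succ k
    rw [mul_succ, integral_cos_pow, ih]
    simp only [sin_pi, sin_zero, mul_zero, sub_zero, zero_div, zero_add, pow_succ]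
    push_cast
    field_simp
    linear_combination (-2) * hk

lemma integral_cos_pow_mul_sin_sq (n : ℕ) :
    ∫ θ in (0 : ℝ)..π, cos θ ^ n * sin θ ^ 2 =
      (∫ θ in (0 : ℝ)..π, cos θ ^ n) / (n + 2) := by
  have hcos : ∀ k, IntervalIntegrable (fun θ => cos θ ^ k) MeasureTheory.volume 0 π := fun k =>
    (continuous_cos.pow k).intervalIntegrable 0 π
  simp_rw [sin_sq, mul_sub, mul_one, ← pow_add]
  rw [integral_sub (hcos n) (hcos (n + 2)), integral_cos_pow]
  simp only [sin_pi, sin_zero, mul_zero, sub_zero, zero_div, zero_add]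
  field_simp
  ring

lemma integral_mul_sqrt_sq_sub_sq {f : ℝ → ℝ} (hf : Continuous f) {r : ℝ} (hr : 0 ≤ r) :
    ∫ x in -r..r, f x * √(r ^ 2 - x ^ 2) =
      r ^ 2 * ∫ θ in (0 : ℝ)..π, f (r * cos θ) * sin θ ^ 2 := by
  have hsubst := integral_comp_mul_deriv (a := π) (b := 0) (f := fun θ => r * cos θ)
    (f' := fun θ => r * -sin θ) (g := fun x => f x * √(r ^ 2 - x ^ 2))
    (fun θ _ => (hasDerivAt_cos θ).const_mul r) (by fun_prop) (by fun_prop)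
  simp only [cos_pi, cos_zero, mul_neg_one, mul_one] at hsubst
  rw [← hsubst, integral_symm, ← integral_neg, ← integral_const_mul]
  refine integral_congr fun θ hθ => ?_
  rw [Set.uIcc_of_le pi_nonneg] at hθ
  have hsin : √(r ^ 2 - (r * cos θ) ^ 2) = r * sin θ := by
    rw [show r ^ 2 - (r * cos θ) ^ 2 = (r * sin θ) ^ 2 by
      linear_combination (-r ^ 2) * sin_sq_add_cos_sq θ]
    exact sqrt_sq (mul_nonneg hr (sin_nonneg_of_mem_Icc hθ))
  simp only [Function.comp, hsin]
  ring

lemma integral_eq_zero_of_odd {E : Type*} [NormedAddCommGroup E] [NormedSpace ℝ E] {f : ℝ → E}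
    (hf : ∀ x, f (-x) = -f x) (a : ℝ) : ∫ x in -a..a, f x = 0 := by
  have : IsAddTorsionFree E := .of_isTorsionFree ℝ E
  have h := integral_comp_neg (a := -a) (b := a) f
  simp only [hf, integral_neg, neg_neg] at h
  exact neg_eq_self.1 h

lemma catalan_eq_factorial_div {K : Type*} [Field K] [CharZero K] (m : ℕ) :
    (catalan m : K) = (2 * m)! / ((m + 1)! * m !) := by
  have hm : (m ! : K) ≠ 0 := cast_ne_zero.2 (factorial_ne_zero m)
  have hm1 : (m : K) + 1 ≠ 0 := cast_add_one_ne_zero m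
  have h := cast_choose K (by omega : m ≤ 2 * m)
  rw [show 2 * m - m = m by omega, ← centralBinom_eq_two_mul_choose,
    ← succ_mul_catalan_eq_centralBinom, eq_div_iff (mul_ne_zero hm hm)] at h
  rw [factorial_succ, cast_mul, cast_succ, eq_div_iff (mul_ne_zero (mul_ne_zero hm1 hm) hm), ← h]
  push_cast
  ring

lemma integral_even_pow_mul_sqrt_four_sub_sq (m : ℕ) :
    ∫ x in (-2 : ℝ)..2, x ^ (2 * m) * √(4 - x ^ 2) = 2 * π * catalan m := by
  have hC : ((m : ℝ) + 1) * catalan m = m.centralBinom := by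
    exact_mod_cast succ_mul_catalan_eq_centralBinom m
  rw [show (4 : ℝ) = 2 ^ 2 by norm_num, integral_mul_sqrt_sq_sub_sq (by fun_prop) zero_le_two]
  simp_rw [mul_pow, mul_assoc]
  rw [integral_const_mul, integral_cos_pow_mul_sin_sq, integral_cos_pow_even, ← hC, pow_mul]
  push_cast
  field_simp
  ring

/-- **Moments of the Wigner semicircle law.** The even moments are the Catalan
numbers `(2m)!/((m+1)! m!)`, the odd moments vanish. -/
theorem wigner_semicircle_moments (m : ℕ) :
    (∫ x in (-2 : ℝ)..2, x ^ (2 * m) * (Real.sqrt (4 - x ^ 2) / (2 * Real.pi)) =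
        (catalan m : ℝ)) ∧
    ((catalan m : ℝ) = ((2 * m).factorial : ℝ) / ((m + 1).factorial * m.factorial)) ∧
    (∫ x in (-2 : ℝ)..2, x ^ (2 * m + 1) * (Real.sqrt (4 - x ^ 2) / (2 * Real.pi)) = 0) := by
  refine ⟨?_, catalan_eq_factorial_div m, integral_eq_zero_of_odd (fun x => ?_) 2⟩
  · simp_rw [mul_div_assoc', integral_div, integral_even_pow_mul_sqrt_four_sub_sq]
    field_simp
  · rw [Odd.neg_pow ⟨m, rfl⟩, neg_sq]
    ring
end

section
/- (Strong convergence lemma.) Let H be a complex Hilbert space, q ∈ ℝ with −1 < q < 1, and α a bounded operator on H satisfying α α* − q² α* α = (1 − q²)·1; set Γ := 1 − α* α. If Γ is injective, then α^k → 0 in the strong operator topology, i.e., for every ξ ∈ H one has ‖α^k ξ‖ → 0 as k → ∞. -/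
/-!
The relation gives `α Γ = q² Γ α`, hence `α^k Γ = q^{2k} Γ α^k`, and together with the
C*-identity `‖α α*‖ = ‖α‖²` it yields `‖α‖² ≤ q² ‖α‖² + 1 - q²`, so `α` is a contraction.
Thus `α^k` decays geometrically on the range of `Γ`, which is dense because `Γ` is self-adjoint
and injective; since the contractions `α^k` are equicontinuous, the decay extends to all of `H`.
-/

open ContinuousLinearMap Filter

theorem mul_one_sub_mul_eq_smul_of_qCCR {R A : Type*} [CommRing R] [Ring A] [Algebra R A]
    {a b : A} {c : R} (h : a * b - c • (b * a) = (1 - c) • 1) :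
    a * (1 - b * a) = c • ((1 - b * a) * a) := by
  have hab : a * b = c • (b * a) + (1 - c) • 1 := sub_eq_iff_eq_add'.mp h
  rw [mul_sub, mul_one, ← mul_assoc, hab]
  simp only [add_mul, smul_mul_assoc, one_mul, sub_mul, smul_sub, sub_smul, one_smul, mul_assoc]
  abel

theorem pow_mul_eq_smul_mul_pow {R A : Type*} [CommSemiring R] [Semiring A] [Algebra R A]
    {a g : A} {c : R} (h : a * g = c • (g * a)) (k : ℕ) : a ^ k * g = c ^ k • (g * a ^ k) := by
  induction k with
  | zero => simp
  | succ k ih =>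
    rw [pow_succ', mul_assoc, ih, mul_smul_comm, ← mul_assoc, h, smul_mul_assoc, smul_smul,
      mul_assoc, ← pow_succ, pow_succ']

theorem CStarRing.norm_le_one_of_qCCR {𝕜 A : Type*} [RCLike 𝕜] [NormedRing A] [StarRing A]
    [CStarRing A] [NormedAlgebra 𝕜 A] {a : A} {c : ℝ} (hc₀ : 0 ≤ c) (hc₁ : c < 1)
    (h : a * star a - (c : 𝕜) • (star a * a) = (1 - (c : 𝕜)) • 1) : ‖a‖ ≤ 1 := by
  have hone : ‖(1 : A)‖ ≤ 1 := by
    have := CStarRing.norm_star_mul_self (x := (1 : A))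
    rw [star_one, one_mul] at this
    nlinarith [norm_nonneg (1 : A)]
  have hnorm : ‖a‖ * ‖a‖ ≤ c * (‖a‖ * ‖a‖) + (1 - c) := by
    calc ‖a‖ * ‖a‖ = ‖a * star a‖ := CStarRing.norm_self_mul_star.symm
      _ = ‖(c : 𝕜) • (star a * a) + (1 - (c : 𝕜)) • 1‖ := by rw [← sub_eq_iff_eq_add'.mp h]
      _ ≤ c * ‖star a * a‖ + (1 - c) * ‖(1 : A)‖ := by
        refine (norm_add_le _ _).trans (le_of_eq ?_)
        rw [norm_smul, norm_smul, ← RCLike.ofReal_one, ← RCLike.ofReal_sub, RCLike.norm_ofReal,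
          RCLike.norm_ofReal, abs_of_nonneg hc₀, abs_of_nonneg (by linarith)]
      _ ≤ c * (‖a‖ * ‖a‖) + (1 - c) := by
        rw [CStarRing.norm_star_mul_self]
        exact add_le_add_right (mul_le_of_le_one_right (by linarith) hone) _
  have hsq : ‖a‖ * ‖a‖ ≤ 1 := le_of_mul_le_mul_left (by linarith) (sub_pos.2 hc₁)
  nlinarith [norm_nonneg a]

theorem ContinuousLinearMap.denseRange_of_injective_adjoint {𝕜 E F : Type*} [RCLike 𝕜]
    [NormedAddCommGroup E] [InnerProductSpace 𝕜 E] [CompleteSpace E]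
    [NormedAddCommGroup F] [InnerProductSpace 𝕜 F] [CompleteSpace F]
    {T : E →L[𝕜] F} (hT : Function.Injective (adjoint T)) : DenseRange T := by
  have : Dense (LinearMap.range (T : E →ₗ[𝕜] F) : Set F) := by
    rw [Submodule.dense_iff_topologicalClosure_eq_top, Submodule.topologicalClosure_eq_top_iff]
    exact (T.orthogonal_range).trans (LinearMap.ker_eq_bot_of_injective hT)
  simpa [DenseRange, LinearMap.coe_range] using this

namespace ContinuousLinearMap

variable {𝕜 E : Type*} [NontriviallyNormedField 𝕜] [NormedAddCommGroup E] [NormedSpace 𝕜 E]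
  {a g : E →L[𝕜] E}

theorem lipschitzWith_one_pow (ha : ‖a‖ ≤ 1) (k : ℕ) : LipschitzWith 1 ⇑(a ^ k) := by
  simpa [FunLike.coe_pow_eq_iterate] using
    (a.lipschitz.weaken (by exact_mod_cast ha : ‖a‖₊ ≤ 1)).iterate k

theorem tendsto_pow_apply_of_mul_eq_smul {c : 𝕜} (hc : ‖c‖ < 1) (ha : ‖a‖ ≤ 1)
    (h : a * g = c • (g * a)) (x : E) : Tendsto (fun k => (a ^ k) (g x)) atTop (nhds 0) := by
  have hbound : ∀ k : ℕ, ‖(a ^ k) (g x)‖ ≤ ‖c‖ ^ k * (‖g‖ * ‖x‖) := fun k => by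
    rw [← mul_apply_eq_comp, pow_mul_eq_smul_mul_pow h, smul_apply, mul_apply_eq_comp,
      norm_smul, norm_pow]
    gcongr
    calc ‖g ((a ^ k) x)‖ ≤ ‖g‖ * ‖(a ^ k) x‖ := g.le_opNorm _
      _ ≤ ‖g‖ * ‖x‖ := by
        gcongr
        simpa using (lipschitzWith_one_pow ha k).norm_le_mul (map_zero _) x
  refine squeeze_zero_norm hbound ?_
  simpa using (tendsto_pow_atTop_nhds_zero_of_lt_one (norm_nonneg c) hc).mul_const (‖g‖ * ‖x‖)

theorem tendsto_pow_apply_zero_of_mul_eq_smul {c : 𝕜} (hc : ‖c‖ < 1) (ha : ‖a‖ ≤ 1)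
    (h : a * g = c • (g * a)) (hg : DenseRange g) (y : E) :
    Tendsto (fun k => (a ^ k) y) atTop (nhds 0) :=
  hg.induction_on y
    ((LipschitzWith.uniformEquicontinuous _ 1 (lipschitzWith_one_pow ha)).equicontinuous
      |>.isClosed_setOfPred_tendsto continuous_const)
    (tendsto_pow_apply_of_mul_eq_smul hc ha h)

end ContinuousLinearMap

/-- **Strong convergence lemma.** If `Γ = 1 − α* α` is injective, then `α^k → 0`
strongly. -/
theorem qCCR_pow_tendsto_zero
    {H : Type*} [NormedAddCommGroup H] [InnerProductSpace ℂ H] [CompleteSpace H]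
    (q : ℝ) (hq : -1 < q) (hq' : q < 1)
    (α : H →L[ℂ] H)
    (hccr : α * adjoint α - ((q : ℂ) ^ 2) • (adjoint α * α) =
      ((1 : ℂ) - (q : ℂ) ^ 2) • (1 : H →L[ℂ] H))
    (hinj : Function.Injective ((1 : H →L[ℂ] H) - adjoint α * α)) :
    ∀ ξ : H, Tendsto (fun k : ℕ => ‖(α ^ k) ξ‖) atTop (nhds 0) := by
  have hq2 : q ^ 2 < 1 := by nlinarith
  have hα : ‖α‖ ≤ 1 := by
    refine CStarRing.norm_le_one_of_qCCR (sq_nonneg q) hq2 (𝕜 := ℂ) ?_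
    simpa [star_eq_adjoint] using hccr
  have hΓ : DenseRange ((1 : H →L[ℂ] H) - adjoint α * α) :=
    denseRange_of_injective_adjoint <| by simpa [← star_eq_adjoint] using hinj
  have hq2_norm : ‖(q : ℂ) ^ 2‖ < 1 := by
    rwa [norm_pow, Complex.norm_real, Real.norm_eq_abs, sq_abs]
  exact fun ξ => tendsto_zero_iff_norm_tendsto_zero.mp <|
    tendsto_pow_apply_zero_of_mul_eq_smul hq2_norm hα (mul_one_sub_mul_eq_smul_of_qCCR hccr) hΓ ξ
end

section
/- (The operators P_k form a decreasing sequence of projections.) Let H be a complex Hilbert space, q ∈ ℝ with 0 < |q| < 1, and α a bounded operator on H satisfying α α* − q² α* α = (1 − q²)·1; set Γ := 1 − α* α. Since ‖Γ‖ ≤ 1 and q² < 1, each operator 1 − q^{2j} Γ (j ≥ 1) is invertible in B(H). Define P_0 := 1 and, for k ≥ 1, P_k := (α*)^k (1 − q² Γ)^{−1} (1 − q⁴ Γ)^{−1} ⋯ (1 − q^{2k} Γ)^{−1} α^k. Then each P_k is an orthogonal projection (P_k* = P_k and P_k² = P_k), and the sequence is decreasing: P_{k+1} ≤ P_k for all k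 ≥ 0, i.e., P_k − P_{k+1} is a positive operator. -/
/-!
With `C_k := α^k α*^k`, the relations `α α* = 1 − q²Γ` and `α Γ = q² Γ α` give
`C_{k+1} = (1 − q^{2(k+1)}Γ) C_k`, so the product of inverses in `P_k` is `C_k⁻¹` and
`P_k = a* (a a*)⁻¹ a` with `a = α^k`: the projection onto the range of `(α*)^k`.
Invertibility holds because `1 − cΓ = (1 − c) + c α*α ≥ (1 − c)` for `0 ≤ c < 1`.
Finally `α^{k+1} = α α^k` gives `P_{k+1} P_k = P_{k+1}`, which for projections means
`P_{k+1} ≤ P_k`.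
-/

open ContinuousLinearMap

/-- Given `α` and `q`, let `Γ := 1 − α* α` and define
`P_k := (α*)^k (1 − q²Γ)⁻¹ (1 − q⁴Γ)⁻¹ ⋯ (1 − q^{2k}Γ)⁻¹ α^k` (with `P_0 = 1`),
where the inverses are taken in the Banach algebra `B(H)` (via `Ring.inverse`). -/
noncomputable def qCCRProj {H : Type*} [NormedAddCommGroup H] [InnerProductSpace ℂ H]
    [CompleteSpace H] (q : ℝ) (α : H →L[ℂ] H) (k : ℕ) : H →L[ℂ] H :=
  (adjoint α) ^ k *
    ((List.range k).map (fun j =>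
      Ring.inverse ((1 : H →L[ℂ] H) -
        ((q : ℂ) ^ (2 * (j + 1))) • ((1 : H →L[ℂ] H) - adjoint α * α)))).prod *
    α ^ k

open scoped Ring

section StarRing
variable {R : Type*} [Ring R] [StarRing R]

noncomputable def starRangeProj (a : R) : R := star a * (a * star a)⁻¹ʳ * a

theorem isStarProjection_starRangeProj {a : R} (ha : IsUnit (a * star a)) :
    IsStarProjection (starRangeProj a) where
  isIdempotentElem := by
    calc star a * (a * star a)⁻¹ʳ * a * (star a * (a * star a)⁻¹ʳ * a)
        = star a * ((a * star a)⁻¹ʳ * (a * star a) * (a * star a)⁻¹ʳ) * a := by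
          simp only [mul_assoc]
      _ = star a * (a * star a)⁻¹ʳ * a := by
          rw [Ring.inverse_mul_cancel _ ha, one_mul, mul_assoc]
  isSelfAdjoint := by
    have : IsSelfAdjoint (a * star a) := .mul_star_self a
    rw [IsSelfAdjoint, starRangeProj, star_mul, star_mul, star_star, ← Ring.inverse_star,
      this.star_eq, mul_assoc]

theorem starRangeProj_mul_mul_starRangeProj {a : R} (b : R) (ha : IsUnit (a * star a)) :
    starRangeProj (b * a) * starRangeProj a = starRangeProj (b * a) := by
  unfold starRangeProj
  calc _ = star (b * a) * (b * a * star (b * a))⁻¹ʳ * b *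
        (a * star a * (a * star a)⁻¹ʳ) * a := by
          simp only [mul_assoc]
    _ = _ := by rw [Ring.mul_inverse_cancel _ ha, mul_one, mul_assoc _ b a]

end StarRing

namespace qCCR
variable {H : Type*} [NormedAddCommGroup H] [InnerProductSpace ℂ H] [CompleteSpace H]
  (q : ℝ) (α : H →L[ℂ] H)

noncomputable def factor (j : ℕ) : H →L[ℂ] H :=
  1 - ((q : ℂ) ^ (2 * j)) • (1 - adjoint α * α)

theorem isUnit_factor (hq1 : |q| < 1) {j : ℕ} (hj : 1 ≤ j) : IsUnit (factor q α j) := by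
  have hc0 : 0 ≤ q ^ (2 * j) := by rw [pow_mul]; positivity
  have hc1 : q ^ (2 * j) < 1 := by
    rw [pow_mul]
    exact pow_lt_one₀ (sq_nonneg q) ((sq_lt_one_iff_abs_lt_one q).mpr hq1) (by omega)
  have h : factor q α j =
      (1 - q ^ (2 * j)) • (1 : H →L[ℂ] H) + q ^ (2 * j) • (star α * α) := by
    rw [factor, star_eq_adjoint, ← Complex.ofReal_pow, Complex.coe_smul]
    module
  rw [h]
  refine (IsStrictlyPositive.add_nonneg ?_ ?_).isUnit
  · exact isStrictlyPositive_one.smul (sub_pos.mpr hc1)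
  · exact smul_nonneg hc0 (star_mul_self_nonneg α)

variable {q α}
variable (hccr : α * adjoint α - ((q : ℂ) ^ 2) • (adjoint α * α) =
      ((1 : ℂ) - (q : ℂ) ^ 2) • (1 : H →L[ℂ] H))
include hccr

theorem mul_adjoint_eq_factor_one : α * adjoint α = factor q α 1 := by
  rw [sub_eq_iff_eq_add.mp hccr, factor]
  module

theorem mul_factor (j : ℕ) : α * factor q α j = factor q α (j + 1) * α := by
  have h : α * adjoint α * α = factor q α 1 * α := by rw [mul_adjoint_eq_factor_one hccr]
  simp only [factor, mul_sub, sub_mul, mul_smul_comm, smul_mul_assoc, mul_one, one_mul] at h ⊢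
  rw [← mul_assoc, h, mul_add, mul_one, pow_add]
  module

theorem pow_mul_factor (k j : ℕ) : α ^ k * factor q α j = factor q α (j + k) * α ^ k := by
  induction k generalizing j with
  | zero => simp
  | succ k ih =>
    rw [pow_succ', mul_assoc, ih, ← mul_assoc, mul_factor hccr, mul_assoc, ← pow_succ',
      add_assoc]

theorem pow_succ_mul_adjoint_pow_succ (k : ℕ) :
    α ^ (k + 1) * adjoint α ^ (k + 1) = factor q α (k + 1) * (α ^ k * adjoint α ^ k) := by
  calc α ^ (k + 1) * adjoint α ^ (k + 1) = α ^ k * (α * adjoint α) * adjoint α ^ k := by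
        rw [pow_succ, pow_succ', mul_assoc, mul_assoc, mul_assoc]
    _ = factor q α (k + 1) * (α ^ k * adjoint α ^ k) := by
        rw [mul_adjoint_eq_factor_one hccr, pow_mul_factor hccr, add_comm, mul_assoc]

variable (hq1 : |q| < 1)
include hq1

theorem isUnit_pow_mul_star_pow (k : ℕ) : IsUnit (α ^ k * star (α ^ k)) := by
  rw [star_pow, star_eq_adjoint]
  induction k with
  | zero => simp
  | succ k ih =>
    rw [pow_succ_mul_adjoint_pow_succ hccr]
    exact (isUnit_factor q α hq1 (by omega)).mul ih

theorem prod_inverse_factor_eq (k : ℕ) :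
    ((List.range k).map (fun j => (factor q α (j + 1))⁻¹ʳ)).prod =
      (α ^ k * adjoint α ^ k)⁻¹ʳ := by
  induction k with
  | zero => simp
  | succ k ih =>
    rw [List.range_succ, List.map_append, List.prod_append, ih, pow_succ_mul_adjoint_pow_succ hccr,
      Ring.inverse_mul (.inl (isUnit_factor q α hq1 (by omega)))]
    simp

theorem qCCRProj_eq_starRangeProj (k : ℕ) : qCCRProj q α k = starRangeProj (α ^ k) := by
  rw [starRangeProj, star_pow, star_eq_adjoint, ← prod_inverse_factor_eq hccr hq1]
  rfl

theorem isStarProjection_qCCRProj (k : ℕ) : IsStarProjection (qCCRProj q α k) := by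
  rw [qCCRProj_eq_starRangeProj hccr hq1]
  exact isStarProjection_starRangeProj (isUnit_pow_mul_star_pow hccr hq1 k)

theorem qCCRProj_succ_mul_self (k : ℕ) :
    qCCRProj q α (k + 1) * qCCRProj q α k = qCCRProj q α (k + 1) := by
  rw [qCCRProj_eq_starRangeProj hccr hq1, qCCRProj_eq_starRangeProj hccr hq1, pow_succ']
  exact starRangeProj_mul_mul_starRangeProj α (isUnit_pow_mul_star_pow hccr hq1 k)

end qCCR

theorem qCCRProj_isProjection_antitone_general
    {H : Type*} [NormedAddCommGroup H] [InnerProductSpace ℂ H] [CompleteSpace H]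
    (q : ℝ) (hq1 : |q| < 1)
    (α : H →L[ℂ] H)
    (hccr : α * adjoint α - ((q : ℂ) ^ 2) • (adjoint α * α) =
      ((1 : ℂ) - (q : ℂ) ^ 2) • (1 : H →L[ℂ] H)) :
    (∀ j : ℕ, 1 ≤ j →
      IsUnit ((1 : H →L[ℂ] H) -
        ((q : ℂ) ^ (2 * j)) • ((1 : H →L[ℂ] H) - adjoint α * α))) ∧
    (∀ k : ℕ, IsSelfAdjoint (qCCRProj q α k) ∧
      qCCRProj q α k * qCCRProj q α k = qCCRProj q α k) ∧
    (∀ k : ℕ, (qCCRProj q α k - qCCRProj q α (k + 1)).IsPositive) := by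
  have hP := qCCR.isStarProjection_qCCRProj hccr hq1
  refine ⟨fun j hj => qCCR.isUnit_factor q α hq1 hj,
    fun k => ⟨(hP k).isSelfAdjoint, (hP k).isIdempotentElem⟩, fun k => ?_⟩
  rw [← nonneg_iff_isPositive, sub_nonneg, (hP (k + 1)).le_iff_mul_eq_left (hP k)]
  exact qCCR.qCCRProj_succ_mul_self hccr hq1 k

/-- **The `P_k` form a decreasing sequence of orthogonal projections.** Moreover each
`1 − q^{2j} Γ` (`j ≥ 1`) is invertible in `B(H)`. -/
theorem qCCRProj_isProjection_antitone
    {H : Type*} [NormedAddCommGroup H] [InnerProductSpace ℂ H] [CompleteSpace H]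
    (q : ℝ) (hq0 : q ≠ 0) (hq1 : |q| < 1)
    (α : H →L[ℂ] H)
    (hccr : α * adjoint α - ((q : ℂ) ^ 2) • (adjoint α * α) =
      ((1 : ℂ) - (q : ℂ) ^ 2) • (1 : H →L[ℂ] H)) :
    (∀ j : ℕ, 1 ≤ j →
      IsUnit ((1 : H →L[ℂ] H) -
        ((q : ℂ) ^ (2 * j)) • ((1 : H →L[ℂ] H) - adjoint α * α))) ∧
    (∀ k : ℕ, IsSelfAdjoint (qCCRProj q α k) ∧
      qCCRProj q α k * qCCRProj q α k = qCCRProj q α k) ∧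
    (∀ k : ℕ, (qCCRProj q α k - qCCRProj q α (k + 1)).IsPositive) :=
  qCCRProj_isProjection_antitone_general q hq1 α hccr
end

section
/- (Spectral decomposition of Γ.) Let H be a complex Hilbert space, q ∈ ℝ with 0 < |q| < 1, and α a bounded operator on H satisfying α α* − q² α* α = (1 − q²)·1; set Γ := 1 − α* α and assume Γ is injective. With P_0 := 1, P_k := (α*)^k (1 − q² Γ)^{−1} ⋯ (1 − q^{2k} Γ)^{−1} α^k for k ≥ 1, and E_k := P_k − P_{k+1} for k ≥ 0, the following hold: P_k → 0 in the strong operator topology as k → ∞ (so the E_k sum strongly to the identity), and Γ = Σ_{k=0}^{∞} q^{2k} E_k, with the series converging in operator norm. -/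
open ContinuousLinearMap Filter Finset

/-- The spectral projections `E_k := P_k − P_{k+1}`. -/
noncomputable def qCCRSpec {H : Type*} [NormedAddCommGroup H] [InnerProductSpace ℂ H]
    [CompleteSpace H] (q : ℝ) (α : H →L[ℂ] H) (k : ℕ) : H →L[ℂ] H :=
  qCCRProj q α k - qCCRProj q α (k + 1)

/-!
Put `Γ = 1 - α⋆α` and `X_k = α^k α⋆^k`. The q²-CCR gives `α Γ = q² Γ α`, hence
`X_{k+1} = (1 - q^{2(k+1)} Γ) X_k`: the product of inverses in `P_k` is `X_k⁻¹`, and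
`P_k = α⋆^k X_k⁻¹ α^k` is the orthogonal projection onto the range of `α⋆^k`. These projections
decrease, so `P_k ξ` converges. Moving `Γ` across `α⋆^k` gives `‖Γ P_k‖ ≤ C q^{2k}`, with `C`
bounding `∏_j (1 - q^{2j})⁻¹`; thus the strong limit lies in `ker Γ = 0`. Finally
`Γ E_k = q^{2k} E_k`, so `∑_{k<n} q^{2k} E_k = Γ (1 - P_n)`, which tends to `Γ` in norm.
-/

lemma Real.inv_one_sub_le_exp {x b : ℝ} (hx : 0 ≤ x) (hxb : x ≤ b) (hb : b < 1) :
    (1 - x)⁻¹ ≤ Real.exp (x / (1 - b)) := by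
  have hx1 : 0 < 1 - x := by linarith
  calc (1 - x)⁻¹ = x / (1 - x) + 1 := by field_simp; ring
    _ ≤ Real.exp (x / (1 - x)) := Real.add_one_le_exp _
    _ ≤ Real.exp (x / (1 - b)) := by gcongr

lemma Real.prod_inv_one_sub_pow_succ_le {b : ℝ} (hb0 : 0 ≤ b) (hb1 : b < 1) (k : ℕ) :
    ∏ j ∈ range k, (1 - b ^ (j + 1))⁻¹ ≤ Real.exp (1 / (1 - b) ^ 2) := by
  have hpow : ∀ j, b ^ (j + 1) ≤ b := fun j => pow_le_of_le_one hb0 hb1.le j.succ_ne_zero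
  have hsum : ∑ j ∈ range k, b ^ (j + 1) ≤ 1 / (1 - b) := by
    calc ∑ j ∈ range k, b ^ (j + 1) ≤ ∑ j ∈ range k, b ^ j :=
          sum_le_sum fun j _ => pow_le_pow_of_le_one hb0 hb1.le j.le_succ
      _ ≤ b ^ 0 / (1 - b) := by
          rw [range_eq_Ico]; exact geom_sum_Ico_le_of_lt_one hb0 hb1
      _ = 1 / (1 - b) := by rw [pow_zero]
  calc ∏ j ∈ range k, (1 - b ^ (j + 1))⁻¹
      ≤ ∏ j ∈ range k, Real.exp (b ^ (j + 1) / (1 - b)) :=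
        prod_le_prod (fun j _ => inv_nonneg.2 (by linarith [hpow j]))
          fun j _ => Real.inv_one_sub_le_exp (by positivity) (hpow j) hb1
    _ = Real.exp ((∑ j ∈ range k, b ^ (j + 1)) / (1 - b)) := by
        rw [← Real.exp_sum, sum_div]
    _ ≤ Real.exp (1 / (1 - b) ^ 2) := by
        rw [sq, ← div_div]; gcongr

open scoped Ring

lemma Commute.ringInverse_right {M₀ : Type*} [MonoidWithZero M₀] {x y : M₀}
    (h : Commute x y) : Commute x y⁻¹ʳ := by
  by_cases hy : IsUnit y
  · obtain ⟨u, rfl⟩ := hy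
    rw [Ring.inverse_unit]
    exact h.units_inv_right
  · rw [Ring.inverse_non_unit _ hy]
    exact Commute.zero_right x

lemma CStarRing.norm_one_le {A : Type*} [NormedRing A] [StarRing A] [CStarRing A] :
    ‖(1 : A)‖ ≤ 1 := by
  rcases subsingleton_or_nontrivial A with _ | _
  · simp [Subsingleton.elim (1 : A) 0]
  · exact (CStarRing.norm_one).le

lemma norm_pow_le_one_of_norm_le_one {R : Type*} [NormedRing R] (h1 : ‖(1 : R)‖ ≤ 1) {x : R}
    (hx : ‖x‖ ≤ 1) (k : ℕ) : ‖x ^ k‖ ≤ 1 := by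
  cases k with
  | zero => simpa using h1
  | succ k => exact (norm_pow_le' x k.succ_pos).trans (pow_le_one₀ (norm_nonneg x) hx)

lemma norm_ring_inverse_one_sub_le {R : Type*} [NormedRing R] [HasSummableGeomSeries R]
    (h1 : ‖(1 : R)‖ ≤ 1) {x : R} (hx : ‖x‖ < 1) : ‖(1 - x)⁻¹ʳ‖ ≤ (1 - ‖x‖)⁻¹ := by
  rw [← geom_series_eq_inverse x hx]
  linarith [tsum_geometric_le_of_norm_lt_one x hx]

section RangeProj

variable {R : Type*} [Semiring R] [StarRing R]

noncomputable def rangeProj (b : R) : R := b * (star b * b)⁻¹ʳ * star b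

lemma isSelfAdjoint_rangeProj (b : R) : IsSelfAdjoint (rangeProj b) := by
  simp only [IsSelfAdjoint, rangeProj, star_mul, star_star, ← Ring.inverse_star, mul_assoc]

lemma rangeProj_mul_self {b : R} (h : IsUnit (star b * b)) : rangeProj b * b = b := by
  rw [rangeProj, mul_assoc _ (star b), mul_assoc, Ring.inverse_mul_cancel _ h, mul_one]

lemma rangeProj_mul_rangeProj_mul {b : R} (h : IsUnit (star b * b)) (c : R) :
    rangeProj b * rangeProj (b * c) = rangeProj (b * c) := by
  have hfactor : rangeProj (b * c) =
      b * (c * (star (b * c) * (b * c))⁻¹ʳ * star (b * c)) := by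
    simp only [rangeProj, mul_assoc]
  rw [hfactor, ← mul_assoc, rangeProj_mul_self h]

lemma rangeProj_star (b : R) : rangeProj (star b) = star b * (b * star b)⁻¹ʳ * b := by
  rw [rangeProj, star_star]

end RangeProj

section Projections

variable {𝕜 E : Type*} [RCLike 𝕜] [NormedAddCommGroup E] [InnerProductSpace 𝕜 E] [CompleteSpace E]

lemma norm_apply_sq_eq_add_of_mul_eq {P Q : E →L[𝕜] E} (hP : IsSelfAdjoint P)
    (hQ : IsSelfAdjoint Q) (hPQ : P * Q = Q) (hQQ : Q * Q = Q) (x : E) :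
    ‖P x‖ ^ 2 = ‖Q x‖ ^ 2 + ‖P x - Q x‖ ^ 2 := by
  have hQP : Q * P = Q := by simpa [hP.star_eq, hQ.star_eq] using congrArg star hPQ
  have horth : inner 𝕜 (Q x) (P x - Q x) = 0 := by
    rw [← adjoint_inner_right, ← star_eq_adjoint, hQ.star_eq, map_sub, ← mul_apply_eq_comp,
      ← mul_apply_eq_comp, hQP, hQQ, sub_self, inner_zero_right]
  simpa [sq] using norm_add_sq_eq_norm_sq_add_norm_sq_of_inner_eq_zero _ _ horth

lemma cauchySeq_apply_of_isSelfAdjoint_of_mul_eq {P : ℕ → E →L[𝕜] E}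
    (hsa : ∀ k, IsSelfAdjoint (P k)) (hmul : ∀ k m, k ≤ m → P k * P m = P m) (x : E) :
    CauchySeq fun k => P k x := by
  have hpyth : ∀ k m, k ≤ m → ‖P k x‖ ^ 2 = ‖P m x‖ ^ 2 + ‖P k x - P m x‖ ^ 2 := fun k m hkm =>
    norm_apply_sq_eq_add_of_mul_eq (hsa k) (hsa m) (hmul k m hkm) (hmul m m le_rfl) x
  have hanti : Antitone fun k => ‖P k x‖ ^ 2 := antitone_nat_of_succ_le fun k => by
    linarith [hpyth k (k + 1) k.le_succ, sq_nonneg ‖P k x - P (k + 1) x‖]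
  have hconv := tendsto_atTop_ciInf hanti ⟨0, by rintro _ ⟨k, rfl⟩; positivity⟩
  rw [Metric.cauchySeq_iff']
  intro ε hε
  obtain ⟨N, hN⟩ := Metric.cauchySeq_iff'.1 hconv.cauchySeq (ε ^ 2) (by positivity)
  refine ⟨N, fun n hn => ?_⟩
  have h : ‖P N x‖ ^ 2 - ‖P n x‖ ^ 2 < ε ^ 2 := by
    simpa [Real.dist_eq, abs_sub_comm, abs_of_nonneg (sub_nonneg.2 (hanti hn))] using hN n hn
  rw [hpyth N n hn, add_sub_cancel_left] at h
  rw [dist_comm, dist_eq_norm]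
  exact lt_of_pow_lt_pow_left₀ 2 hε.le h

end Projections

section IsQCCR

variable {A : Type*} [CStarAlgebra A]

def IsQCCR (q : ℝ) (a : A) : Prop :=
  a * star a - ((q : ℂ) ^ 2) • (star a * a) = ((1 : ℂ) - (q : ℂ) ^ 2) • 1

variable {q : ℝ} {a : A}

namespace IsQCCR

variable (h : IsQCCR q a)
include h

lemma mul_star : a * star a = 1 - ((q : ℂ) ^ 2) • (1 - star a * a) := by
  rw [IsQCCR, sub_eq_iff_eq_add] at h
  rw [h]
  module

lemma mul_one_sub_star_mul : a * (1 - star a * a) = ((q : ℂ) ^ 2) • ((1 - star a * a) * a) := by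
  calc a * (1 - star a * a) = a - (a * star a) * a := by noncomm_ring
    _ = ((q : ℂ) ^ 2) • ((1 - star a * a) * a) := by
      rw [h.mul_star, sub_mul, one_mul, smul_mul_assoc]; abel

lemma pow_mul_one_sub_star_mul (k : ℕ) :
    a ^ k * (1 - star a * a) = ((q : ℂ) ^ (2 * k)) • ((1 - star a * a) * a ^ k) := by
  induction k with
  | zero => simp
  | succ k ih =>
    rw [pow_succ', mul_assoc, ih, mul_smul_comm, ← mul_assoc, h.mul_one_sub_star_mul,
      smul_mul_assoc, smul_smul, mul_assoc, ← pow_succ', ← pow_add]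
    ring_nf

lemma one_sub_star_mul_mul_star_pow (k : ℕ) :
    (1 - star a * a) * star a ^ k = ((q : ℂ) ^ (2 * k)) • (star a ^ k * (1 - star a * a)) := by
  simpa [star_pow, Complex.conj_ofReal] using congrArg star (h.pow_mul_one_sub_star_mul k)

lemma pow_succ_mul_star_pow_succ (k : ℕ) :
    a ^ (k + 1) * star a ^ (k + 1) =
      (1 - ((q : ℂ) ^ (2 * (k + 1))) • (1 - star a * a)) * (a ^ k * star a ^ k) := by
  have hshift : a ^ k * (1 - ((q : ℂ) ^ 2) • (1 - star a * a)) =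
      (1 - ((q : ℂ) ^ (2 * (k + 1))) • (1 - star a * a)) * a ^ k := by
    have hexp : (q : ℂ) ^ 2 * (q : ℂ) ^ (2 * k) = (q : ℂ) ^ (2 * (k + 1)) := by ring
    rw [mul_sub, mul_one, mul_smul_comm, h.pow_mul_one_sub_star_mul, smul_smul, hexp]
    simp only [sub_mul, one_mul, smul_mul_assoc]
  rw [pow_succ, pow_succ', mul_assoc, ← mul_assoc a, h.mul_star, ← mul_assoc, hshift, mul_assoc]

lemma commute_pow_mul_star_pow (k : ℕ) : Commute (1 - star a * a) (a ^ k * star a ^ k) := by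
  induction k with
  | zero => simp
  | succ k ih =>
    rw [h.pow_succ_mul_star_pow_succ]
    exact ((Commute.one_right _).sub_right ((Commute.refl _).smul_right _)).mul_right ih

lemma commute_star_mul_pow_mul_star_pow (k : ℕ) : Commute (star a * a) (a ^ k * star a ^ k) := by
  simpa using (Commute.one_left _).sub_left (h.commute_pow_mul_star_pow k)

lemma commute_one_sub_smul_pow_mul_star_pow (c : ℂ) (k : ℕ) :
    Commute (1 - c • (1 - star a * a)) (a ^ k * star a ^ k) :=
  (Commute.one_left _).sub_left ((h.commute_pow_mul_star_pow k).smul_left c)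

lemma list_prod_inverse_eq (k : ℕ) :
    ((List.range k).map fun j => (1 - ((q : ℂ) ^ (2 * (j + 1))) • (1 - star a * a))⁻¹ʳ).prod =
      (a ^ k * star a ^ k)⁻¹ʳ := by
  induction k with
  | zero => simp
  | succ k ih =>
    rw [List.range_succ, List.map_append, List.prod_append, ih, h.pow_succ_mul_star_pow_succ,
      Ring.mul_inverse_rev' (h.commute_one_sub_smul_pow_mul_star_pow _ k)]
    simp

lemma one_sub_star_mul_mul_rangeProj (k : ℕ) :
    (1 - star a * a) * rangeProj (star a ^ k) =
      ((q : ℂ) ^ (2 * k)) • (star a ^ k * (1 - star a * a) * (a ^ k * star a ^ k)⁻¹ʳ * a ^ k) := by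
  rw [← star_pow, rangeProj_star, star_pow, ← mul_assoc, ← mul_assoc,
    h.one_sub_star_mul_mul_star_pow, smul_mul_assoc, smul_mul_assoc]

variable (hq : |q| < 1)
include hq

lemma norm_le_one : ‖a‖ ≤ 1 := by
  have hq2 : q ^ 2 < 1 := (sq_lt_one_iff_abs_lt_one q).2 hq
  have hsplit : a * star a = ((1 : ℂ) - (q : ℂ) ^ 2) • 1 + ((q : ℂ) ^ 2) • (star a * a) := by
    rw [← h, sub_add_cancel]
  have hcoef : ‖((1 : ℂ) - (q : ℂ) ^ 2)‖ = 1 - q ^ 2 := by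
    rw [← Complex.ofReal_pow, ← Complex.ofReal_one, ← Complex.ofReal_sub, Complex.norm_real,
      Real.norm_of_nonneg (by linarith)]
  have hnorm : ‖a‖ * ‖a‖ ≤ (1 - q ^ 2) + q ^ 2 * (‖a‖ * ‖a‖) := by
    calc ‖a‖ * ‖a‖ = ‖a * star a‖ := CStarRing.norm_self_mul_star.symm
      _ ≤ (1 - q ^ 2) * ‖(1 : A)‖ + q ^ 2 * ‖star a * a‖ := by
        rw [hsplit]
        refine (norm_add_le _ _).trans_eq ?_
        rw [norm_smul, norm_smul, hcoef, norm_pow, Complex.norm_real, Real.norm_eq_abs, sq_abs]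
      _ ≤ (1 - q ^ 2) + q ^ 2 * (‖a‖ * ‖a‖) := by
        rw [CStarRing.norm_star_mul_self]
        linarith [mul_le_of_le_one_right (by linarith : 0 ≤ 1 - q ^ 2)
          (CStarRing.norm_one_le (A := A))]
  have hsq : ‖a‖ * ‖a‖ ≤ 1 := by nlinarith
  nlinarith [norm_nonneg a]

variable [PartialOrder A] [StarOrderedRing A]

lemma norm_one_sub_star_mul_le_one : ‖1 - star a * a‖ ≤ 1 := by
  refine (CStarAlgebra.mem_Icc_iff_norm_le_one.1 ⟨?_, ?_⟩).2
  · refine sub_nonneg.2 ((CStarAlgebra.norm_le_one_iff_of_nonneg _).1 ?_)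
    rw [CStarRing.norm_star_mul_self]
    exact mul_le_one₀ (h.norm_le_one hq) (norm_nonneg a) (h.norm_le_one hq)
  · exact sub_le_self _ (star_mul_self_nonneg a)

lemma norm_smul_one_sub_star_mul_le (j : ℕ) :
    ‖((q : ℂ) ^ (2 * (j + 1))) • (1 - star a * a)‖ ≤ (q ^ 2) ^ (j + 1) := by
  rw [norm_smul, norm_pow, Complex.norm_real, Real.norm_eq_abs, pow_mul, sq_abs]
  exact mul_le_of_le_one_right (by positivity) (h.norm_one_sub_star_mul_le_one hq)

lemma norm_smul_one_sub_star_mul_lt_one (j : ℕ) :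
    ‖((q : ℂ) ^ (2 * (j + 1))) • (1 - star a * a)‖ < 1 :=
  (h.norm_smul_one_sub_star_mul_le hq j).trans_lt
    (pow_lt_one₀ (sq_nonneg q) ((sq_lt_one_iff_abs_lt_one q).2 hq) j.succ_ne_zero)

lemma isUnit_pow_mul_star_pow (k : ℕ) : IsUnit (a ^ k * star a ^ k) := by
  induction k with
  | zero => simp
  | succ k ih =>
    rw [h.pow_succ_mul_star_pow_succ]
    exact (isUnit_one_sub_of_norm_lt_one (h.norm_smul_one_sub_star_mul_lt_one hq k)).mul ih

lemma norm_inverse_pow_mul_star_pow_le (k : ℕ) :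
    ‖(a ^ k * star a ^ k)⁻¹ʳ‖ ≤ ∏ j ∈ range k, (1 - (q ^ 2) ^ (j + 1))⁻¹ := by
  induction k with
  | zero => simpa using CStarRing.norm_one_le (A := A)
  | succ k ih =>
    have hb : (q ^ 2) ^ (k + 1) < 1 :=
      pow_lt_one₀ (sq_nonneg q) ((sq_lt_one_iff_abs_lt_one q).2 hq) k.succ_ne_zero
    have hfactor : ‖(1 - ((q : ℂ) ^ (2 * (k + 1))) • (1 - star a * a))⁻¹ʳ‖ ≤
        (1 - (q ^ 2) ^ (k + 1))⁻¹ := by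
      refine (norm_ring_inverse_one_sub_le CStarRing.norm_one_le
        (h.norm_smul_one_sub_star_mul_lt_one hq k)).trans ?_
      gcongr
      exact h.norm_smul_one_sub_star_mul_le hq k
    rw [h.pow_succ_mul_star_pow_succ,
      Ring.mul_inverse_rev' (h.commute_one_sub_smul_pow_mul_star_pow _ k), prod_range_succ]
    exact (norm_mul_le _ _).trans
      (mul_le_mul ih hfactor (norm_nonneg _) ((norm_nonneg _).trans ih))

lemma mul_inverse_pow_mul_star_pow (k : ℕ) :
    a * (a ^ k * star a ^ k)⁻¹ʳ = a * star a * (a ^ (k + 1) * star a ^ (k + 1))⁻¹ʳ * a := by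
  have hX := h.isUnit_pow_mul_star_pow hq k
  have hY := h.isUnit_pow_mul_star_pow hq (k + 1)
  have hshift : a ^ (k + 1) * star a ^ (k + 1) * a = a * star a * a * (a ^ k * star a ^ k) := by
    calc a ^ (k + 1) * star a ^ (k + 1) * a = a * ((a ^ k * star a ^ k) * (star a * a)) := by
          rw [pow_succ', pow_succ]; simp only [mul_assoc]
      _ = a * star a * a * (a ^ k * star a ^ k) := by
          rw [(h.commute_star_mul_pow_mul_star_pow k).symm.eq]; simp only [mul_assoc]
  have hcomm : Commute (a * star a) (a ^ (k + 1) * star a ^ (k + 1))⁻¹ʳ := by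
    rw [h.mul_star]
    exact (h.commute_one_sub_smul_pow_mul_star_pow _ (k + 1)).ringInverse_right
  calc a * (a ^ k * star a ^ k)⁻¹ʳ
      = (a ^ (k + 1) * star a ^ (k + 1))⁻¹ʳ * (a ^ (k + 1) * star a ^ (k + 1) * a) *
          (a ^ k * star a ^ k)⁻¹ʳ := by
        rw [← mul_assoc, Ring.inverse_mul_cancel _ hY, one_mul]
    _ = (a ^ (k + 1) * star a ^ (k + 1))⁻¹ʳ * (a * star a) * a := by
        rw [hshift, mul_assoc, mul_assoc (a * star a * a), Ring.mul_inverse_cancel _ hX, mul_one,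
          ← mul_assoc]
    _ = a * star a * (a ^ (k + 1) * star a ^ (k + 1))⁻¹ʳ * a := by rw [hcomm.eq]

lemma one_sub_star_mul_mul_rangeProj_sub (k : ℕ) :
    (1 - star a * a) * (rangeProj (star a ^ k) - rangeProj (star a ^ (k + 1))) =
      ((q : ℂ) ^ (2 * k)) • (rangeProj (star a ^ k) - rangeProj (star a ^ (k + 1))) := by
  have key : star a ^ k * (star a * a) * (a ^ k * star a ^ k)⁻¹ʳ * a ^ k =
      star a ^ (k + 1) * (a * star a) * (a ^ (k + 1) * star a ^ (k + 1))⁻¹ʳ * a ^ (k + 1) := by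
    calc star a ^ k * (star a * a) * (a ^ k * star a ^ k)⁻¹ʳ * a ^ k
        = star a ^ (k + 1) * (a * (a ^ k * star a ^ k)⁻¹ʳ) * a ^ k := by
          rw [pow_succ]; simp only [mul_assoc]
      _ = _ := by
          rw [h.mul_inverse_pow_mul_star_pow hq, pow_succ' a k]; simp only [mul_assoc]
  -- `key` is the claim divided by `q ^ (2 * k)`, once `Γ = 1 - star a * a` and
  -- `a * star a = 1 - q² Γ` are expanded
  rw [h.mul_star] at key
  rw [mul_sub, h.one_sub_star_mul_mul_rangeProj, h.one_sub_star_mul_mul_rangeProj,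
    ← star_pow, ← star_pow, rangeProj_star, rangeProj_star, star_pow, star_pow]
  simp only [mul_sub, sub_mul, mul_one, mul_smul_comm, smul_mul_assoc, mul_assoc] at key ⊢
  rw [show 2 * (k + 1) = 2 * k + 2 by ring, pow_add]
  linear_combination (norm := module) (-(q : ℂ) ^ (2 * k)) • key

lemma rangeProj_mul_rangeProj_of_le {k m : ℕ} (hkm : k ≤ m) :
    rangeProj (star a ^ k) * rangeProj (star a ^ m) = rangeProj (star a ^ m) := by
  obtain ⟨d, rfl⟩ := Nat.exists_eq_add_of_le hkm
  rw [pow_add]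
  exact rangeProj_mul_rangeProj_mul (by simpa [star_pow] using h.isUnit_pow_mul_star_pow hq k) _

lemma norm_one_sub_star_mul_mul_rangeProj_le (k : ℕ) :
    ‖(1 - star a * a) * rangeProj (star a ^ k)‖ ≤ (q ^ 2) ^ k * Real.exp (1 / (1 - q ^ 2) ^ 2) := by
  have ha := h.norm_le_one hq
  have hpow : ‖star a ^ k‖ ≤ 1 :=
    norm_pow_le_one_of_norm_le_one CStarRing.norm_one_le (by rwa [norm_star]) k
  have hinv : ‖(a ^ k * star a ^ k)⁻¹ʳ‖ ≤ Real.exp (1 / (1 - q ^ 2) ^ 2) :=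
    (h.norm_inverse_pow_mul_star_pow_le hq k).trans (Real.prod_inv_one_sub_pow_succ_le
      (sq_nonneg q) ((sq_lt_one_iff_abs_lt_one q).2 hq) k)
  rw [h.one_sub_star_mul_mul_rangeProj, norm_smul, norm_pow, Complex.norm_real, Real.norm_eq_abs,
    pow_mul, sq_abs]
  gcongr
  calc ‖star a ^ k * (1 - star a * a) * (a ^ k * star a ^ k)⁻¹ʳ * a ^ k‖
      ≤ ‖star a ^ k‖ * ‖1 - star a * a‖ * ‖(a ^ k * star a ^ k)⁻¹ʳ‖ * ‖a ^ k‖ := by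
        exact (norm_mul_le _ _).trans (mul_le_mul_of_nonneg_right norm_mul₃_le (norm_nonneg _))
    _ ≤ 1 * 1 * Real.exp (1 / (1 - q ^ 2) ^ 2) * 1 := by
        gcongr
        · exact h.norm_one_sub_star_mul_le_one hq
        · exact norm_pow_le_one_of_norm_le_one CStarRing.norm_one_le ha k
    _ = Real.exp (1 / (1 - q ^ 2) ^ 2) := by ring

lemma tendsto_norm_one_sub_star_mul_mul_rangeProj :
    Tendsto (fun k => ‖(1 - star a * a) * rangeProj (star a ^ k)‖) atTop (nhds 0) := by
  have hgeom := (tendsto_pow_atTop_nhds_zero_of_lt_one (sq_nonneg q)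
    ((sq_lt_one_iff_abs_lt_one q).2 hq)).mul_const (Real.exp (1 / (1 - q ^ 2) ^ 2))
  rw [zero_mul] at hgeom
  exact squeeze_zero (fun _ => norm_nonneg _) (h.norm_one_sub_star_mul_mul_rangeProj_le hq) hgeom

end IsQCCR

end IsQCCR

section qCCR

variable {H : Type*} [NormedAddCommGroup H] [InnerProductSpace ℂ H] [CompleteSpace H]
  {q : ℝ} {α : H →L[ℂ] H}

lemma qCCRProj_zero : qCCRProj q α 0 = 1 := by simp [qCCRProj]

lemma sum_range_qCCRSpec (n : ℕ) : ∑ k ∈ range n, qCCRSpec q α k = 1 - qCCRProj q α n := by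
  rw [← qCCRProj_zero (q := q) (α := α)]
  exact sum_range_sub' _ n

variable (h : IsQCCR q α)
include h

lemma qCCRProj_eq_rangeProj (k : ℕ) : qCCRProj q α k = rangeProj (star α ^ k) := by
  rw [qCCRProj, ← star_eq_adjoint, h.list_prod_inverse_eq, ← star_pow, rangeProj_star, star_pow]

variable (hq : |q| < 1)
include hq

lemma sum_range_smul_qCCRSpec (n : ℕ) :
    ∑ k ∈ range n, ((q : ℂ) ^ (2 * k)) • qCCRSpec q α k =
      (1 - star α * α) * (1 - qCCRProj q α n) := by
  rw [← sum_range_qCCRSpec, mul_sum]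
  refine sum_congr rfl fun k _ => ?_
  rw [qCCRSpec, qCCRProj_eq_rangeProj h, qCCRProj_eq_rangeProj h,
    h.one_sub_star_mul_mul_rangeProj_sub hq]

lemma tendsto_qCCRProj_apply (hinj : Function.Injective ((1 : H →L[ℂ] H) - star α * α)) (ξ : H) :
    Tendsto (fun k => qCCRProj q α k ξ) atTop (nhds 0) := by
  simp only [qCCRProj_eq_rangeProj h]
  obtain ⟨η, hη⟩ := cauchySeq_tendsto_of_complete <| cauchySeq_apply_of_isSelfAdjoint_of_mul_eq
    (fun k => isSelfAdjoint_rangeProj _) (fun _ _ => h.rangeProj_mul_rangeProj_of_le hq) ξ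
  have hΓ : Tendsto (fun k => ((1 : H →L[ℂ] H) - star α * α) (rangeProj (star α ^ k) ξ)) atTop
      (nhds 0) := by
    have hnorm := (h.tendsto_norm_one_sub_star_mul_mul_rangeProj hq).mul_const ‖ξ‖
    rw [zero_mul] at hnorm
    exact squeeze_zero_norm (fun k => ((1 - star α * α) * rangeProj (star α ^ k)).le_opNorm ξ) hnorm
  have hη0 : η = 0 := hinj <| by
    rw [map_zero]
    exact tendsto_nhds_unique ((((1 : H →L[ℂ] H) - star α * α).continuous.tendsto η).comp hη) hΓ
  rwa [hη0] at hη

end qCCR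

theorem qCCR_spectral_decomposition_general
    {H : Type*} [NormedAddCommGroup H] [InnerProductSpace ℂ H] [CompleteSpace H]
    (q : ℝ) (hq1 : |q| < 1)
    (α : H →L[ℂ] H)
    (hccr : α * adjoint α - ((q : ℂ) ^ 2) • (adjoint α * α) =
      ((1 : ℂ) - (q : ℂ) ^ 2) • (1 : H →L[ℂ] H))
    (hinj : Function.Injective ((1 : H →L[ℂ] H) - adjoint α * α)) :
    (∀ ξ : H, Tendsto (fun k : ℕ => qCCRProj q α k ξ) atTop (nhds 0)) ∧
    (∀ ξ : H,
      Tendsto (fun n : ℕ => ∑ k ∈ Finset.range n, qCCRSpec q α k ξ) atTop (nhds ξ)) ∧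
    Tendsto
      (fun n : ℕ => ∑ k ∈ Finset.range n, ((q : ℂ) ^ (2 * k)) • qCCRSpec q α k)
      atTop (nhds ((1 : H →L[ℂ] H) - adjoint α * α)) := by
  rw [← star_eq_adjoint] at hccr hinj ⊢
  have h : IsQCCR q α := hccr
  have hP := tendsto_qCCRProj_apply h hq1 hinj
  refine ⟨hP, fun ξ => ?_, ?_⟩
  · have hsum : ∀ n, ∑ k ∈ range n, qCCRSpec q α k ξ = ξ - qCCRProj q α n ξ := fun n => by
      rw [← _root_.sum_apply, sum_range_qCCRSpec]; rfl
    simpa only [hsum, sub_zero] using (hP ξ).const_sub ξ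
  · simp only [sum_range_smul_qCCRSpec h hq1, mul_sub, mul_one, qCCRProj_eq_rangeProj h]
    simpa using tendsto_const_nhds.sub
      (tendsto_zero_iff_norm_tendsto_zero.2 (h.tendsto_norm_one_sub_star_mul_mul_rangeProj hq1))

/-- **Spectral decomposition of `Γ`.** If `Γ` is injective then `P_k → 0` strongly,
the `E_k` sum strongly to the identity, and `Γ = Σ_k q^{2k} E_k` with the series
converging in operator norm. -/
theorem qCCR_spectral_decomposition
    {H : Type*} [NormedAddCommGroup H] [InnerProductSpace ℂ H] [CompleteSpace H]
    (q : ℝ) (hq0 : q ≠ 0) (hq1 : |q| < 1)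
    (α : H →L[ℂ] H)
    (hccr : α * adjoint α - ((q : ℂ) ^ 2) • (adjoint α * α) =
      ((1 : ℂ) - (q : ℂ) ^ 2) • (1 : H →L[ℂ] H))
    (hinj : Function.Injective ((1 : H →L[ℂ] H) - adjoint α * α)) :
    (∀ ξ : H, Tendsto (fun k : ℕ => qCCRProj q α k ξ) atTop (nhds 0)) ∧
    (∀ ξ : H,
      Tendsto (fun n : ℕ => ∑ k ∈ Finset.range n, qCCRSpec q α k ξ) atTop (nhds ξ)) ∧
    Tendsto
      (fun n : ℕ => ∑ k ∈ Finset.range n, ((q : ℂ) ^ (2 * k)) • qCCRSpec q α k)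
      atTop (nhds ((1 : H →L[ℂ] H) - adjoint α * α)) :=
  qCCR_spectral_decomposition_general q hq1 α hccr hinj
end

section
/- (α* implements unitaries between the eigenspaces.) Let H be a complex Hilbert space, q ∈ ℝ with 0 < |q| < 1, and α a bounded operator on H satisfying α α* − q² α* α = (1 − q²)·1; set Γ := 1 − α* α, assume Γ injective, and let P_k and E_k := P_k − P_{k+1} be as constructed from the Neumann series. Then for every k ≥ 0 and every ξ in the range of E_k: α* ξ lies in the range of E_{k+1} and ‖α* ξ‖² = (1 − q^{2(k+1)}) ‖ξ‖²; conversely, for every η in the range of E_{k+1}: α η lies in the range of E_k and ‖α η‖² = (1 − q^{2(k+1)}) ‖η‖². In particular, α*/√(1 − q^{2(k+1)}) restricted to E_k H and α/√(1 − q^{2(k+1)}) restricted to E_{k+1} H are an inverse pair of unitaries between E_k H and E_{k+1} H. -/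
/-!
With `Γ = 1 - α*α` the relation reads `αα* = 1 - q²Γ`, whence `αΓ = q²Γα` and `Γα* = q²α*Γ`, so
`α (1 - q^{2j}Γ) = (1 - q^{2(j+1)}Γ) α`. Pushing the last inverse factor of `P_{k+1}` through `α^k`
gives the recursion `P_{k+1} = α* P_k (1 - q²Γ)⁻¹ α`, hence the same recursion for `E_k`.
From it: `P_{k+1} α* = α* P_k`, every `P_k` commutes with `Γ` (so `α P_{k+1} = P_k α`), and
`Γ = q^{2k}` on `E_k H`. For `ξ ∈ E_k H` this gives `‖α*ξ‖² = ⟪αα*ξ, ξ⟫ = (1 - q^{2(k+1)})‖ξ‖²`,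
and symmetrically for `α` on `E_{k+1} H`. The inverses exist because the relation forces
`‖α‖ ≤ 1` in the C*-norm, so `‖Γ‖ ≤ 1`.
-/

open ContinuousLinearMap

theorem SemiconjBy.ringInverse {M₀ : Type*} [MonoidWithZero M₀] {a x y : M₀}
    (h : SemiconjBy a x y) (hx : IsUnit x) (hy : IsUnit y) :
    SemiconjBy a (Ring.inverse x) (Ring.inverse y) := by
  obtain ⟨u, rfl⟩ := hx
  obtain ⟨v, rfl⟩ := hy
  simpa only [Ring.inverse_unit] using h.units_inv_right

theorem CStarAlgebra.norm_one_sub_le_one {A : Type*} [CStarAlgebra A] [PartialOrder A]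
    [StarOrderedRing A] {a : A} (h0 : 0 ≤ a) (h1 : ‖a‖ ≤ 1) : ‖1 - a‖ ≤ 1 :=
  (mem_Icc_iff_norm_le_one.1
    ⟨sub_nonneg.2 ((norm_le_one_iff_of_nonneg a).1 h1), sub_le_self _ h0⟩).2

theorem CStarAlgebra.norm_le_one_of_qCCR {A : Type*} [CStarAlgebra A] {q : ℝ} (hq : |q| < 1)
    {a : A} (h : a * star a - ((q : ℂ) ^ 2) • (star a * a) = ((1 : ℂ) - (q : ℂ) ^ 2) • 1) :
    ‖a‖ ≤ 1 := by
  have hq2 : q ^ 2 < 1 := (sq_lt_one_iff_abs_lt_one q).2 hq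
  have hone : ‖(1 : A)‖ ≤ 1 := by
    rcases subsingleton_or_nontrivial A with hA | hA
    · simp [Subsingleton.elim (1 : A) 0]
    · exact CStarRing.norm_one.le
  have hbound : ‖a‖ * ‖a‖ ≤ (1 - q ^ 2) + q ^ 2 * (‖a‖ * ‖a‖) := by
    rw [sub_eq_iff_eq_add] at h
    calc ‖a‖ * ‖a‖ = ‖a * star a‖ := CStarRing.norm_self_mul_star.symm
      _ ≤ ‖((1 : ℂ) - (q : ℂ) ^ 2) • (1 : A)‖ + ‖((q : ℂ) ^ 2) • (star a * a)‖ := by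
        rw [h]; exact norm_add_le _ _
      _ ≤ (1 - q ^ 2) + q ^ 2 * (‖a‖ * ‖a‖) := by
        rw [norm_smul, norm_smul, CStarRing.norm_star_mul_self,
          show ((1 : ℂ) - (q : ℂ) ^ 2) = ((1 - q ^ 2 : ℝ) : ℂ) by push_cast; ring,
          Complex.norm_real, Real.norm_of_nonneg (by linarith), norm_pow, Complex.norm_real,
          Real.norm_eq_abs, sq_abs]
        gcongr
        exact mul_le_of_le_one_right (by linarith) hone
  have hsq : ‖a‖ * ‖a‖ ≤ 1 := by nlinarith
  nlinarith [norm_nonneg a]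

theorem ContinuousLinearMap.norm_apply_sq_of_adjoint_apply_apply {𝕜 E F : Type*} [RCLike 𝕜]
    [NormedAddCommGroup E] [InnerProductSpace 𝕜 E] [CompleteSpace E]
    [NormedAddCommGroup F] [InnerProductSpace 𝕜 F] [CompleteSpace F]
    (T : E →L[𝕜] F) {x : E} {c : ℝ} (h : adjoint T (T x) = (c : 𝕜) • x) :
    ‖T x‖ ^ 2 = c * ‖x‖ ^ 2 := by
  rw [apply_norm_sq_eq_inner_adjoint_right, comp_apply, h, inner_smul_right,
    inner_self_eq_norm_sq_to_K, ← RCLike.ofReal_pow, ← RCLike.ofReal_mul, RCLike.ofReal_re]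

namespace QCCR

variable {H : Type*} [NormedAddCommGroup H] [InnerProductSpace ℂ H] [CompleteSpace H]

def IsQCCR (q : ℝ) (α : H →L[ℂ] H) : Prop :=
  α * adjoint α - ((q : ℂ) ^ 2) • (adjoint α * α) = ((1 : ℂ) - (q : ℂ) ^ 2) • (1 : H →L[ℂ] H)

noncomputable def gamma (α : H →L[ℂ] H) : H →L[ℂ] H := 1 - adjoint α * α

noncomputable def factor (q : ℝ) (α : H →L[ℂ] H) (j : ℕ) : H →L[ℂ] H :=
  1 - ((q : ℂ) ^ (2 * j)) • gamma α

noncomputable def shift (q : ℝ) (α X : H →L[ℂ] H) : H →L[ℂ] H :=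
  adjoint α * X * Ring.inverse (factor q α 1) * α

variable {q : ℝ} {α : H →L[ℂ] H}

theorem adjoint_mul_self_eq : adjoint α * α = 1 - gamma α := (sub_sub_cancel _ _).symm

theorem factor_one : factor q α 1 = 1 - ((q : ℂ) ^ 2) • gamma α := by
  rw [factor, mul_one]

theorem commute_gamma_factor (j : ℕ) : Commute (gamma α) (factor q α j) :=
  (Commute.one_right _).sub_right ((Commute.refl _).smul_right _)

theorem qCCRProj_eq (k : ℕ) : qCCRProj q α k = adjoint α ^ k *
    ((List.range k).map fun j => Ring.inverse (factor q α (j + 1))).prod * α ^ k := rfl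

theorem qCCRProj_zero : qCCRProj q α 0 = 1 := by
  simp [qCCRProj]

theorem shift_sub (X Y : H →L[ℂ] H) : shift q α (X - Y) = shift q α X - shift q α Y := by
  simp only [shift, mul_sub, sub_mul]

theorem shift_smul (c : ℂ) (X : H →L[ℂ] H) : shift q α (c • X) = c • shift q α X := by
  simp only [shift, mul_smul_comm, smul_mul_assoc]

section Relation

variable (hccr : IsQCCR q α)
include hccr

theorem mul_adjoint_eq : α * adjoint α = factor q α 1 := by
  rw [IsQCCR, sub_eq_iff_eq_add] at hccr
  rw [hccr, factor_one, gamma, smul_sub, sub_smul, one_smul]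
  abel

theorem mul_gamma : α * gamma α = ((q : ℂ) ^ 2) • (gamma α * α) := by
  conv_lhs => rw [gamma, mul_sub, mul_one, ← mul_assoc, mul_adjoint_eq hccr, factor_one,
    sub_mul, one_mul, smul_mul_assoc]
  abel

theorem gamma_mul_adjoint : gamma α * adjoint α = ((q : ℂ) ^ 2) • (adjoint α * gamma α) := by
  conv_lhs => rw [gamma, sub_mul, one_mul, mul_assoc, mul_adjoint_eq hccr, factor_one,
    mul_sub, mul_one, mul_smul_comm]
  abel

theorem semiconjBy_factor (j : ℕ) : SemiconjBy α (factor q α j) (factor q α (j + 1)) := by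
  rw [SemiconjBy, factor, factor, mul_sub, sub_mul, mul_one, one_mul, mul_smul_comm,
    mul_gamma hccr, smul_mul_assoc, smul_smul, ← pow_add, Nat.mul_succ]

theorem semiconjBy_pow_factor (j k : ℕ) :
    SemiconjBy (α ^ k) (factor q α j) (factor q α (j + k)) := by
  induction k generalizing j with
  | zero => exact SemiconjBy.one_left _
  | succ k ih =>
    rw [pow_succ, ← add_assoc, add_right_comm]
    exact (ih (j + 1)).mul_left (semiconjBy_factor hccr j)

theorem gamma_mul_shift (X : H →L[ℂ] H) :
    gamma α * shift q α X = ((q : ℂ) ^ 2) • shift q α (gamma α * X) := by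
  simp only [shift, ← mul_assoc, gamma_mul_adjoint hccr, smul_mul_assoc]

variable (hq1 : |q| < 1)
include hq1

theorem norm_gamma_le_one : ‖gamma α‖ ≤ 1 := by
  have hα : ‖α‖ ≤ 1 := CStarAlgebra.norm_le_one_of_qCCR hq1 hccr
  refine CStarAlgebra.norm_one_sub_le_one (star_mul_self_nonneg α) ?_
  rw [← star_eq_adjoint, CStarRing.norm_star_mul_self]
  nlinarith [norm_nonneg α]

theorem isUnit_factor (j : ℕ) : IsUnit (factor q α (j + 1)) := by
  refine isUnit_one_sub_of_norm_lt_one ?_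
  rw [norm_smul, norm_pow, Complex.norm_real, Real.norm_eq_abs]
  calc |q| ^ (2 * (j + 1)) * ‖gamma α‖ ≤ |q| ^ (2 * (j + 1)) :=
        mul_le_of_le_one_right (by positivity) (norm_gamma_le_one hccr hq1)
    _ < 1 := pow_lt_one₀ (abs_nonneg q) hq1 (by omega)

theorem qCCRProj_succ (k : ℕ) : qCCRProj q α (k + 1) = shift q α (qCCRProj q α k) := by
  have key : α ^ k * Ring.inverse (factor q α 1) = Ring.inverse (factor q α (k + 1)) * α ^ k := by
    have h := semiconjBy_pow_factor hccr 1 k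
    rw [add_comm] at h
    exact h.ringInverse (isUnit_factor hccr hq1 0) (isUnit_factor hccr hq1 k)
  rw [qCCRProj_eq, qCCRProj_eq, shift, List.prod_range_succ, pow_succ' (adjoint α), pow_succ α]
  simp only [mul_assoc]
  rw [← mul_assoc _ (α ^ k), ← key, mul_assoc]

theorem shift_mul_adjoint (X : H →L[ℂ] H) : shift q α X * adjoint α = adjoint α * X := by
  rw [shift, mul_assoc, mul_assoc, mul_adjoint_eq hccr,
    Ring.inverse_mul_cancel _ (isUnit_factor hccr hq1 0), mul_one]

theorem mul_shift {X : H →L[ℂ] H} (hX : Commute (factor q α 1) X) :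
    α * shift q α X = X * α := by
  rw [shift, ← mul_assoc, ← mul_assoc, ← mul_assoc, mul_adjoint_eq hccr, hX.eq, mul_assoc X,
    Ring.mul_inverse_cancel _ (isUnit_factor hccr hq1 0), mul_one]

theorem shift_mul_gamma (X : H →L[ℂ] H) :
    shift q α X * gamma α = ((q : ℂ) ^ 2) • shift q α (X * gamma α) := by
  have hΓ : Commute (gamma α) (Ring.inverse (factor q α 1)) :=
    SemiconjBy.ringInverse (commute_gamma_factor 1) (isUnit_factor hccr hq1 0)
      (isUnit_factor hccr hq1 0)
  simp only [shift, mul_assoc, mul_gamma hccr, mul_smul_comm]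
  rw [← mul_assoc (Ring.inverse _) (gamma α), ← hΓ.eq, mul_assoc]

theorem commute_gamma_qCCRProj (k : ℕ) : Commute (gamma α) (qCCRProj q α k) := by
  induction k with
  | zero => rw [qCCRProj_zero]; exact Commute.one_right _
  | succ k ih =>
    rw [Commute, SemiconjBy, qCCRProj_succ hccr hq1, gamma_mul_shift hccr,
      shift_mul_gamma hccr hq1, ih.eq]

theorem commute_factor_qCCRSpec (k : ℕ) : Commute (factor q α 1) (qCCRSpec q α k) :=
  have h (n : ℕ) : Commute (factor q α 1) (qCCRProj q α n) :=
    (Commute.one_left _).sub_left ((commute_gamma_qCCRProj hccr hq1 n).smul_left _)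
  (h k).sub_right (h (k + 1))

theorem qCCRSpec_succ (k : ℕ) : qCCRSpec q α (k + 1) = shift q α (qCCRSpec q α k) := by
  rw [qCCRSpec, qCCRSpec, shift_sub, ← qCCRProj_succ hccr hq1, ← qCCRProj_succ hccr hq1]

theorem adjoint_mul_qCCRSpec (k : ℕ) :
    adjoint α * qCCRSpec q α k = qCCRSpec q α (k + 1) * adjoint α := by
  rw [qCCRSpec_succ hccr hq1, shift_mul_adjoint hccr hq1]

theorem mul_qCCRSpec_succ (k : ℕ) : α * qCCRSpec q α (k + 1) = qCCRSpec q α k * α := by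
  rw [qCCRSpec_succ hccr hq1, mul_shift hccr hq1 (commute_factor_qCCRSpec hccr hq1 k)]

theorem gamma_mul_qCCRSpec (k : ℕ) :
    gamma α * qCCRSpec q α k = ((q : ℂ) ^ (2 * k)) • qCCRSpec q α k := by
  induction k with
  | zero =>
    have h : adjoint α * α * shift q α 1 = adjoint α * α := by
      rw [mul_assoc, mul_shift hccr hq1 (Commute.one_right _), one_mul]
    rw [qCCRSpec, qCCRProj_succ hccr hq1, qCCRProj_zero, mul_zero, pow_zero, one_smul, gamma,
      sub_mul, one_mul, mul_sub, mul_one, h]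
    abel
  | succ k ih =>
    rw [qCCRSpec_succ hccr hq1, gamma_mul_shift hccr, ih, shift_smul, smul_smul, ← pow_add]
    ring_nf

theorem gamma_apply_of_mem_range {k : ℕ} {ξ : H} (hξ : ξ ∈ Set.range (qCCRSpec q α k)) :
    gamma α ξ = ((q : ℂ) ^ (2 * k)) • ξ := by
  obtain ⟨x, rfl⟩ := hξ
  exact congr($(gamma_mul_qCCRSpec hccr hq1 k) x)

theorem mul_adjoint_apply_of_mem_range {k : ℕ} {ξ : H} (hξ : ξ ∈ Set.range (qCCRSpec q α k)) :
    α (adjoint α ξ) = (1 - (q : ℂ) ^ (2 * (k + 1))) • ξ := by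
  have h := congr($(mul_adjoint_eq hccr) ξ)
  rw [mul_apply_eq_comp, factor_one, sub_apply, one_apply_eq_self, smul_apply,
    gamma_apply_of_mem_range hccr hq1 hξ, smul_smul, ← pow_add] at h
  rw [h, sub_smul, one_smul, mul_add, mul_one, add_comm]

theorem adjoint_mul_apply_of_mem_range {k : ℕ} {η : H}
    (hη : η ∈ Set.range (qCCRSpec q α (k + 1))) :
    adjoint α (α η) = (1 - (q : ℂ) ^ (2 * (k + 1))) • η := by
  have h := congr($(adjoint_mul_self_eq (α := α)) η)
  rw [mul_apply_eq_comp, sub_apply, one_apply_eq_self,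
    gamma_apply_of_mem_range hccr hq1 hη] at h
  rw [h, sub_smul, one_smul]

end Relation

end QCCR

theorem qCCR_adjoint_unitary_between_eigenspaces_general
    {H : Type*} [NormedAddCommGroup H] [InnerProductSpace ℂ H] [CompleteSpace H]
    (q : ℝ) (hq1 : |q| < 1)
    (α : H →L[ℂ] H)
    (hccr : α * adjoint α - ((q : ℂ) ^ 2) • (adjoint α * α) =
      ((1 : ℂ) - (q : ℂ) ^ 2) • (1 : H →L[ℂ] H)) :
    ∀ k : ℕ,
      (∀ ξ ∈ Set.range (qCCRSpec q α k),
        adjoint α ξ ∈ Set.range (qCCRSpec q α (k + 1)) ∧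
        ‖adjoint α ξ‖ ^ 2 = (1 - q ^ (2 * (k + 1))) * ‖ξ‖ ^ 2) ∧
      (∀ η ∈ Set.range (qCCRSpec q α (k + 1)),
        α η ∈ Set.range (qCCRSpec q α k) ∧
        ‖α η‖ ^ 2 = (1 - q ^ (2 * (k + 1))) * ‖η‖ ^ 2) := by
  intro k
  constructor
  · rintro ξ ⟨x, rfl⟩
    refine ⟨⟨adjoint α x, congr($(QCCR.adjoint_mul_qCCRSpec hccr hq1 k) x).symm⟩,
      norm_apply_sq_of_adjoint_apply_apply _ ?_⟩
    rw [adjoint_adjoint, QCCR.mul_adjoint_apply_of_mem_range hccr hq1 ⟨x, rfl⟩]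
    simp
  · rintro η ⟨x, rfl⟩
    refine ⟨⟨α x, congr($(QCCR.mul_qCCRSpec_succ hccr hq1 k) x).symm⟩,
      norm_apply_sq_of_adjoint_apply_apply _ ?_⟩
    rw [QCCR.adjoint_mul_apply_of_mem_range hccr hq1 ⟨x, rfl⟩]
    simp

/-- **`α*` implements unitaries between the eigenspaces.** For `ξ` in the range of
`E_k`, `α* ξ` lies in the range of `E_{k+1}` with `‖α* ξ‖² = (1 − q^{2(k+1)}) ‖ξ‖²`;
conversely, for `η` in the range of `E_{k+1}`, `α η` lies in the range of `E_k` with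
`‖α η‖² = (1 − q^{2(k+1)}) ‖η‖²`. -/
theorem qCCR_adjoint_unitary_between_eigenspaces
    {H : Type*} [NormedAddCommGroup H] [InnerProductSpace ℂ H] [CompleteSpace H]
    (q : ℝ) (hq0 : q ≠ 0) (hq1 : |q| < 1)
    (α : H →L[ℂ] H)
    (hccr : α * adjoint α - ((q : ℂ) ^ 2) • (adjoint α * α) =
      ((1 : ℂ) - (q : ℂ) ^ 2) • (1 : H →L[ℂ] H))
    (hinj : Function.Injective ((1 : H →L[ℂ] H) - adjoint α * α)) :
    ∀ k : ℕ,
      (∀ ξ ∈ Set.range (qCCRSpec q α k),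
        adjoint α ξ ∈ Set.range (qCCRSpec q α (k + 1)) ∧
        ‖adjoint α ξ‖ ^ 2 = (1 - q ^ (2 * (k + 1))) * ‖ξ‖ ^ 2) ∧
      (∀ η ∈ Set.range (qCCRSpec q α (k + 1)),
        α η ∈ Set.range (qCCRSpec q α k) ∧
        ‖α η‖ ^ 2 = (1 - q ^ (2 * (k + 1))) * ‖η‖ ^ 2) :=
  qCCR_adjoint_unitary_between_eigenspaces_general q hq1 α hccr
end
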